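/- arXiv:1402.7226 — 5 statements merged into one kernel-verified Lean document; each statement's English description precedes it below -/
import Mathlib

section
/- Let φ: g → g' be a homomorphism of Lie 2-algebras (given by maps φ₀: g₀ → g₀', φ₁: g₁ → g₁', φ₂: g₀ ∧ g₀ → g₁'). If the image of φ₂ is contained in the image of φ₁, then Im φ = Im φ₀ ⊕ Im φ₁ is closed under the differential, the bracket l₂', and the Jacobiator l₃' of g', i.e., it is a Lie 2-subalgebra of g'. -/
universe u

/-- Raw data of a Lie 2-algebra: a 2-term complex `g1 → g0` with a binary bracket
(`l2` on degree 0, `l2m` mixed) and a Jacobiator `l3`. -/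
structure LieTwoStr (g0 g1 : Type u) : Type u where
  d : g1 → g0
  l2 : g0 → g0 → g0
  l2m : g0 → g1 → g1
  l3 : g0 → g0 → g0 → g1

/-- Raw data of a homomorphism of Lie 2-algebras. -/
structure TwoHom (g0 g1 h0 h1 : Type u) : Type u where
  f0 : g0 → h0
  f1 : g1 → h1
  f2 : g0 → g0 → h1

/-- Raw data of an action of a Lie 2-algebra on a 2-term complex `m1 → m0`. -/
structure TwoAction (g0 g1 m0 m1 : Type u) : Type u where
  r0 : g0 → m0 → m0
  r0' : g0 → m1 → m1
  r1 : g1 → m0 → m1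
  r2 : g0 → g0 → m0 → m1

variable (K : Type u) [Field K]
variable {g0 g1 h0 h1 m0 m1 : Type u}
  [AddCommGroup g0] [Module K g0] [AddCommGroup g1] [Module K g1]
  [AddCommGroup h0] [Module K h0] [AddCommGroup h1] [Module K h1]
  [AddCommGroup m0] [Module K m0] [AddCommGroup m1] [Module K m1]

/-- The 2-term `L∞`-algebra axioms (Lie 2-algebra). -/
def IsLieTwoAlgebra (L : LieTwoStr g0 g1) : Prop :=
  IsLinearMap K L.d ∧
  (∀ x, IsLinearMap K (L.l2 x)) ∧ (∀ y, IsLinearMap K (fun x => L.l2 x y)) ∧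
  (∀ x, IsLinearMap K (L.l2m x)) ∧ (∀ a, IsLinearMap K (fun x => L.l2m x a)) ∧
  (∀ x y, IsLinearMap K (L.l3 x y)) ∧ (∀ x z, IsLinearMap K (fun y => L.l3 x y z)) ∧
  (∀ y z, IsLinearMap K (fun x => L.l3 x y z)) ∧
  (∀ x y, L.l2 x y = - L.l2 y x) ∧
  (∀ x y z, L.l3 x y z = - L.l3 y x z) ∧
  (∀ x y z, L.l3 x y z = - L.l3 x z y) ∧
  (∀ x a, L.d (L.l2m x a) = L.l2 x (L.d a)) ∧
  (∀ a b, L.l2m (L.d a) b = - L.l2m (L.d b) a) ∧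
  (∀ x y z, L.d (L.l3 x y z) =
    L.l2 x (L.l2 y z) - L.l2 y (L.l2 x z) - L.l2 (L.l2 x y) z) ∧
  (∀ x y a, L.l3 x y (L.d a) =
    L.l2m x (L.l2m y a) - L.l2m y (L.l2m x a) - L.l2m (L.l2 x y) a) ∧
  (∀ x y z w,
    L.l2m x (L.l3 y z w) - L.l2m y (L.l3 x z w) + L.l2m z (L.l3 x y w)
      - L.l2m w (L.l3 x y z)
    = L.l3 (L.l2 x y) z w - L.l3 (L.l2 x z) y w + L.l3 (L.l2 x w) y z
      + L.l3 (L.l2 y z) x w - L.l3 (L.l2 y w) x z + L.l3 (L.l2 z w) x y)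

/-- The axioms of a homomorphism of Lie 2-algebras. -/
def IsHom (L : LieTwoStr g0 g1) (L' : LieTwoStr h0 h1) (f : TwoHom g0 g1 h0 h1) : Prop :=
  IsLinearMap K f.f0 ∧ IsLinearMap K f.f1 ∧
  (∀ x, IsLinearMap K (f.f2 x)) ∧ (∀ y, IsLinearMap K (fun x => f.f2 x y)) ∧
  (∀ x y, f.f2 x y = - f.f2 y x) ∧
  (∀ a, L'.d (f.f1 a) = f.f0 (L.d a)) ∧
  (∀ x y, f.f0 (L.l2 x y) - L'.l2 (f.f0 x) (f.f0 y) = L'.d (f.f2 x y)) ∧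
  (∀ x a, f.f1 (L.l2m x a) - L'.l2m (f.f0 x) (f.f1 a) = f.f2 x (L.d a)) ∧
  (∀ x y z,
    L'.l2m (f.f0 x) (f.f2 y z) + L'.l2m (f.f0 y) (f.f2 z x) + L'.l2m (f.f0 z) (f.f2 x y)
      + L'.l3 (f.f0 x) (f.f0 y) (f.f0 z)
    = f.f2 (L.l2 x y) z + f.f2 (L.l2 y z) x + f.f2 (L.l2 z x) y + f.f1 (L.l3 x y z))

/-- An action of a Lie 2-algebra `L` on a 2-term complex `dm : m1 → m0`,
i.e. a Lie 2-algebra homomorphism `L → End(m)`. -/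
def IsAction (L : LieTwoStr g0 g1) (dm : m1 → m0) (A : TwoAction g0 g1 m0 m1) : Prop :=
  (∀ x, IsLinearMap K (A.r0 x)) ∧ (∀ α, IsLinearMap K (fun x => A.r0 x α)) ∧
  (∀ x, IsLinearMap K (A.r0' x)) ∧ (∀ ξ, IsLinearMap K (fun x => A.r0' x ξ)) ∧
  (∀ a, IsLinearMap K (A.r1 a)) ∧ (∀ α, IsLinearMap K (fun a => A.r1 a α)) ∧
  (∀ x y, IsLinearMap K (A.r2 x y)) ∧ (∀ x α, IsLinearMap K (fun y => A.r2 x y α)) ∧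
  (∀ y α, IsLinearMap K (fun x => A.r2 x y α)) ∧
  (∀ x y α, A.r2 x y α = - A.r2 y x α) ∧
  (∀ x ξ, dm (A.r0' x ξ) = A.r0 x (dm ξ)) ∧
  (∀ a α, A.r0 (L.d a) α = dm (A.r1 a α)) ∧
  (∀ a ξ, A.r0' (L.d a) ξ = A.r1 a (dm ξ)) ∧
  (∀ x y α, A.r0 (L.l2 x y) α - A.r0 x (A.r0 y α) + A.r0 y (A.r0 x α) = dm (A.r2 x y α)) ∧
  (∀ x y ξ, A.r0' (L.l2 x y) ξ - A.r0' x (A.r0' y ξ) + A.r0' y (A.r0' x ξ)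
      = A.r2 x y (dm ξ)) ∧
  (∀ x a α, A.r1 (L.l2m x a) α - A.r0' x (A.r1 a α) + A.r1 a (A.r0 x α)
      = A.r2 x (L.d a) α) ∧
  (∀ x y z α,
    A.r0' x (A.r2 y z α) - A.r2 y z (A.r0 x α)
      + A.r0' y (A.r2 z x α) - A.r2 z x (A.r0 y α)
      + A.r0' z (A.r2 x y α) - A.r2 x y (A.r0 z α)
    = A.r2 (L.l2 x y) z α + A.r2 (L.l2 y z) x α + A.r2 (L.l2 z x) y α
      + A.r1 (L.l3 x y z) α)

/-- A degree-0 derivation `(X0, X1, lX)` of a Lie 2-algebra `M`. -/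
def IsDer0 (M : LieTwoStr m0 m1) (X0 : m0 → m0) (X1 : m1 → m1) (lX : m0 → m0 → m1) : Prop :=
  (∀ ξ, M.d (X1 ξ) = X0 (M.d ξ)) ∧
  (∀ α β, M.d (lX α β) = X0 (M.l2 α β) - M.l2 (X0 α) β - M.l2 α (X0 β)) ∧
  (∀ α ξ, lX α (M.d ξ) = X1 (M.l2m α ξ) - M.l2m (X0 α) ξ - M.l2m α (X1 ξ)) ∧
  (∀ α β γ, X1 (M.l3 α β γ) =
    lX α (M.l2 β γ) + M.l2m α (lX β γ) + M.l3 (X0 α) β γ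
      + lX β (M.l2 γ α) + M.l2m β (lX γ α) + M.l3 α (X0 β) γ
      + lX γ (M.l2 α β) + M.l2m γ (lX α β) + M.l3 α β (X0 γ))

/-- An action of the Lie 2-algebra `L` on the Lie 2-algebra `M` by derivations:
an action together with maps `lφ x : ∧²m0 → m1` such that each `φ0(x) + l_{φ0(x)}`
is a degree-0 derivation of `M` and `(φ0 + l_{φ0}, φ1, φ2) : L → Der(M)` is a
Lie 2-algebra homomorphism. -/
def IsActionByDerivations (L : LieTwoStr g0 g1) (M : LieTwoStr m0 m1)
    (A : TwoAction g0 g1 m0 m1) (lφ : g0 → m0 → m0 → m1) : Prop :=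
  IsAction K L M.d A ∧
  (∀ x, IsDer0 M (A.r0 x) (A.r0' x) (lφ x)) ∧
  (∀ x α, IsLinearMap K (lφ x α)) ∧ (∀ x β, IsLinearMap K (fun α => lφ x α β)) ∧
  (∀ α β, IsLinearMap K (fun x => lφ x α β)) ∧
  (∀ x α β, lφ x α β = - lφ x β α) ∧
  (∀ a α β, lφ (L.d a) α β =
    A.r1 a (M.l2 α β) - M.l2m α (A.r1 a β) + M.l2m β (A.r1 a α)) ∧
  (∀ x y α β, lφ (L.l2 x y) α β
      - (A.r0' x (lφ y α β) - lφ y (A.r0 x α) β - lφ y α (A.r0 x β))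
      + (A.r0' y (lφ x α β) - lφ x (A.r0 y α) β - lφ x α (A.r0 y β))
    = A.r2 x y (M.l2 α β) - M.l2m α (A.r2 x y β) + M.l2m β (A.r2 x y α))

variable {K}

/-- The abelian (trivial) Lie 2-algebra structure on a 2-term complex. -/
def abelianTwo (dm : m1 → m0) : LieTwoStr m0 m1 where
  d := dm
  l2 := fun _ _ => 0
  l2m := fun _ _ => 0
  l3 := fun _ _ _ => 0

/-- The crossed product `g ▷_φ m` of Lie 2-algebras. -/
def crossedProduct (L : LieTwoStr g0 g1) (M : LieTwoStr m0 m1)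
    (A : TwoAction g0 g1 m0 m1) (lφ : g0 → m0 → m0 → m1) :
    LieTwoStr (g0 × m0) (g1 × m1) where
  d q := (L.d q.1, M.d q.2)
  l2 p q := (L.l2 p.1 q.1, M.l2 p.2 q.2 + A.r0 p.1 q.2 - A.r0 q.1 p.2)
  l2m p q := (L.l2m p.1 q.1, M.l2m p.2 q.2 + A.r0' p.1 q.2 - A.r1 q.1 p.2)
  l3 p q r := (L.l3 p.1 q.1 r.1,
    M.l3 p.2 q.2 r.2 - A.r2 p.1 q.1 r.2 - A.r2 q.1 r.1 p.2 - A.r2 r.1 p.1 q.2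
      + lφ p.1 q.2 r.2 + lφ q.1 r.2 p.2 + lφ r.1 p.2 q.2)

variable (K)

/-- A crossed module of Lie 2-algebras `(m, g, φ, ϕ, σ)`. -/
def IsCrossedModule (L : LieTwoStr g0 g1) (M : LieTwoStr m0 m1)
    (A : TwoAction g0 g1 m0 m1) (lφ : g0 → m0 → m0 → m1)
    (p0 : m0 → g0) (p1 : m1 → g1) (p2 : m0 → m0 → g1) (σ : g0 → m0 → g1) : Prop :=
  IsLieTwoAlgebra K L ∧ IsLieTwoAlgebra K M ∧
  IsActionByDerivations K L M A lφ ∧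
  IsHom K M L ⟨p0, p1, p2⟩ ∧
  (∀ x, IsLinearMap K (σ x)) ∧ (∀ α, IsLinearMap K (fun x => σ x α)) ∧
  -- the homomorphism property of Π = Id + σ + ϕ on the crossed product
  (∀ x α, p0 (A.r0 x α) - L.l2 x (p0 α) = L.d (σ x α)) ∧
  (∀ a α, p1 (A.r1 a α) + L.l2m (p0 α) a = σ (L.d a) α) ∧
  (∀ x ξ, p1 (A.r0' x ξ) - L.l2m x (p1 ξ) = σ x (M.d ξ)) ∧
  (∀ x y α, - L.l2m x (σ y α) + L.l2m y (σ x α) + σ (L.l2 x y) α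
      - σ x (A.r0 y α) + σ y (A.r0 x α)
    = L.l3 x y (p0 α) + p1 (A.r2 x y α)) ∧
  -- conditions (i)-(iv)
  (∀ α β, M.l2 α β = A.r0 (p0 α) β) ∧
  (∀ α ξ, M.l2m α ξ = A.r0' (p0 α) ξ) ∧
  (∀ ξ α, A.r1 (p1 ξ) α = - M.l2m α ξ) ∧
  (∀ α β γ, M.l3 α β γ = - A.r2 (p0 α) (p0 β) γ - A.r1 (σ (p0 α) β) γ) ∧
  (∀ x β γ, lφ x β γ = - A.r2 x (p0 β) γ - A.r1 (σ x β) γ) ∧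
  (∀ α β, p2 α β = σ (p0 α) β) ∧
  (∀ α β, p2 α β = - σ (p0 β) α)

/-- If `Im φ₂ ⊆ Im φ₁`, then `Im φ = Im φ₀ ⊕ Im φ₁` is closed under the
differential, the bracket and the Jacobiator of `g'`, i.e. it is a Lie 2-subalgebra. -/
theorem image_is_subalgebra (L : LieTwoStr g0 g1) (L' : LieTwoStr h0 h1)
    (f : TwoHom g0 g1 h0 h1)
    (hL : IsLieTwoAlgebra K L) (hL' : IsLieTwoAlgebra K L')
    (hf : IsHom K L L' f)
    (h2 : ∀ x y : g0, ∃ b : g1, f.f1 b = f.f2 x y) :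
    (∀ a : g1, ∃ x : g0, f.f0 x = L'.d (f.f1 a)) ∧
    (∀ x y : g0, ∃ z : g0, f.f0 z = L'.l2 (f.f0 x) (f.f0 y)) ∧
    (∀ (x : g0) (a : g1), ∃ b : g1, f.f1 b = L'.l2m (f.f0 x) (f.f1 a)) ∧
    (∀ x y z : g0, ∃ b : g1, f.f1 b = L'.l3 (f.f0 x) (f.f0 y) (f.f0 z)) := by
  obtain ⟨hf0, hf1, _, _, _, hd, hbr, hmix, hl3⟩ := hf
  -- l2m' (f0 x) (f1 a) is in the image of f1
  have key : ∀ (x : g0) (a : g1), ∃ b : g1, f.f1 b = L'.l2m (f.f0 x) (f.f1 a) := by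
    intro x a
    obtain ⟨b, hb⟩ := h2 x (L.d a)
    refine ⟨L.l2m x a - b, ?_⟩
    rw [hf1.map_sub, hb]
    linear_combination (norm := abel) hmix x a
  refine ⟨?_, ?_, key, ?_⟩
  · intro a
    exact ⟨L.d a, (hd a).symm⟩
  · intro x y
    obtain ⟨b, hb⟩ := h2 x y
    refine ⟨L.l2 x y - L.d b, ?_⟩
    rw [hf0.map_sub, ← hd, hb]
    linear_combination (norm := abel) hbr x y
  · intro x y z
    obtain ⟨b1, hb1⟩ := h2 (L.l2 x y) z
    obtain ⟨b2, hb2⟩ := h2 (L.l2 y z) x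
    obtain ⟨b3, hb3⟩ := h2 (L.l2 z x) y
    obtain ⟨cx, hcx⟩ := h2 y z
    obtain ⟨cy, hcy⟩ := h2 z x
    obtain ⟨cz, hcz⟩ := h2 x y
    obtain ⟨ux, hux⟩ := key x cx
    obtain ⟨uy, huy⟩ := key y cy
    obtain ⟨uz, huz⟩ := key z cz
    refine ⟨b1 + b2 + b3 + L.l3 x y z - ux - uy - uz, ?_⟩
    rw [hf1.map_sub, hf1.map_sub, hf1.map_sub, hf1.map_add, hf1.map_add, hf1.map_add,
      hb1, hb2, hb3, hux, huy, huz, hcx, hcy, hcz]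
    have := hl3 x y z
    linear_combination (norm := abel) -this
end

section
/- Let φ: g → g' be a homomorphism of Lie 2-algebras such that φ₂(ker φ₀ ∧ g₀) = 0. Then ker φ = ker φ₀ ⊕ ker φ₁ is an ideal of g, i.e., l₂(ker φ ∧ g) ⊆ ker φ and l₃(ker φ₀ ∧ g₀ ∧ g₀) ⊆ ker φ₁. -/
universe u

variable (K : Type u) [Field K]
variable {g0 g1 h0 h1 m0 m1 : Type u}
  [AddCommGroup g0] [Module K g0] [AddCommGroup g1] [Module K g1]
  [AddCommGroup h0] [Module K h0] [AddCommGroup h1] [Module K h1]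
  [AddCommGroup m0] [Module K m0] [AddCommGroup m1] [Module K m1]

variable {K}

variable (K)

/-- If `φ₂(ker φ₀ ∧ g₀) = 0`, then `ker φ = ker φ₀ ⊕ ker φ₁` is an ideal of
`g`: it is closed under `d` and `l₂`, and `l₃(ker φ₀ ∧ g₀ ∧ g₀) ⊆ ker φ₁`. -/
theorem kernel_is_ideal (L : LieTwoStr g0 g1) (L' : LieTwoStr h0 h1)
    (f : TwoHom g0 g1 h0 h1)
    (hL : IsLieTwoAlgebra K L) (hL' : IsLieTwoAlgebra K L')
    (hf : IsHom K L L' f)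
    (hker : ∀ x y : g0, f.f0 x = 0 → f.f2 x y = 0) :
    (∀ a : g1, f.f1 a = 0 → f.f0 (L.d a) = 0) ∧
    (∀ x y : g0, f.f0 x = 0 → f.f0 (L.l2 x y) = 0) ∧
    (∀ (x : g0) (a : g1), f.f0 x = 0 → f.f1 (L.l2m x a) = 0) ∧
    (∀ (x : g0) (a : g1), f.f1 a = 0 → f.f1 (L.l2m x a) = 0) ∧
    (∀ x y z : g0, f.f0 x = 0 → f.f1 (L.l3 x y z) = 0) := by
  obtain ⟨hf0, hf1, hf2r, hf2l, hf2a, hd, h2, h2m, h3⟩ := hf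
  obtain ⟨hLd, hl2r, hl2l, hl2mr, hl2ml, _, _, _, hanti, _⟩ := hL
  obtain ⟨hL'd, hl2r', hl2l', hl2mr', hl2ml', hl3zz, hl3y, hl3x, _⟩ := hL'
  -- kernel closed under d
  have h1 : ∀ a : g1, f.f1 a = 0 → f.f0 (L.d a) = 0 := by
    intro a ha
    have := hd a
    rw [ha] at this
    rw [← this, hL'd.map_zero]
  -- l2 with x in ker f0
  have h2' : ∀ x y : g0, f.f0 x = 0 → f.f0 (L.l2 x y) = 0 := by
    intro x y hx
    have := h2 x y
    rw [hker x y hx, hL'd.map_zero, sub_eq_zero] at this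
    rw [this, hx]
    exact (hl2l' (f.f0 y)).map_zero
  refine ⟨h1, h2', ?_, ?_, ?_⟩
  · intro x a hx
    have := h2m x a
    rw [hker x (L.d a) hx, sub_eq_zero] at this
    rw [this, hx]
    exact (hl2ml' (f.f1 a)).map_zero
  · intro x a ha
    have hda : f.f0 (L.d a) = 0 := h1 a ha
    have hf2da : f.f2 x (L.d a) = 0 := by
      rw [hf2a x (L.d a), hker (L.d a) x hda, neg_zero]
    have := h2m x a
    rw [hf2da, ha, (hl2mr' (f.f0 x)).map_zero, sub_zero] at this
    exact this
  · intro x y z hx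
    have key := h3 x y z
    have hzx : f.f2 z x = 0 := by rw [hf2a z x, hker x z hx, neg_zero]
    have hxy : f.f2 x y = 0 := hker x y hx
    have hl2xy : f.f0 (L.l2 x y) = 0 := h2' x y hx
    have hl2zx : f.f0 (L.l2 z x) = 0 := by
      rw [hanti z x, hf0.map_neg, h2' x z hx, neg_zero]
    have hl2yz : f.f2 (L.l2 y z) x = 0 := by
      rw [← neg_eq_zero, ← hf2a x (L.l2 y z), hker x (L.l2 y z) hx]
    rw [hx, hzx, hxy, (hl2mr' (f.f0 y)).map_zero, (hl2mr' (f.f0 z)).map_zero,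
      (hl3x (f.f0 y) (f.f0 z)).map_zero, hker (L.l2 x y) z hl2xy,
      hker (L.l2 z x) y hl2zx, hl2yz] at key
    rw [(hl2ml' (f.f2 y z)).map_zero] at key
    simpa using key.symm
end

section
/- Let (g, d, l₂, l₃) be a Lie 2-algebra and h ⊆ g a 2-vector subspace. Then the quotient complex g/h carries an induced Lie 2-algebra structure (with quotient bracket and Jacobiator) if and only if l₂(h ∧ g) ⊆ h and l₃(h₀ ∧ g₀ ∧ g₀) ⊆ h₁. -/
universe u

variable (K : Type u) [Field K]
variable {g0 g1 h0 h1 m0 m1 : Type u}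
  [AddCommGroup g0] [Module K g0] [AddCommGroup g1] [Module K g1]
  [AddCommGroup h0] [Module K h0] [AddCommGroup h1] [Module K h1]
  [AddCommGroup m0] [Module K m0] [AddCommGroup m1] [Module K m1]

variable {K}

variable (K)

/-- For a 2-vector subspace `h ⊆ g` (with `d(h₁) ⊆ h₀`), the quotient
complex `g/h` carries an induced Lie 2-algebra structure (with quotient bracket and
Jacobiator) if and only if `h` is an ideal: `l₂(h ∧ g) ⊆ h` and
`l₃(h₀ ∧ g₀ ∧ g₀) ⊆ h₁`. -/
theorem quotient_iff_ideal (L : LieTwoStr g0 g1) (hL : IsLieTwoAlgebra K L)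
    (h0' : Submodule K g0) (h1' : Submodule K g1)
    (hd : ∀ ξ ∈ h1', L.d ξ ∈ h0') :
    (∃ Q : LieTwoStr (g0 ⧸ h0') (g1 ⧸ h1'),
      IsLieTwoAlgebra K Q ∧
      (∀ ξ : g1, Q.d (Submodule.Quotient.mk ξ) = Submodule.Quotient.mk (L.d ξ)) ∧
      (∀ x y : g0, Q.l2 (Submodule.Quotient.mk x) (Submodule.Quotient.mk y)
          = Submodule.Quotient.mk (L.l2 x y)) ∧
      (∀ (x : g0) (a : g1), Q.l2m (Submodule.Quotient.mk x) (Submodule.Quotient.mk a)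
          = Submodule.Quotient.mk (L.l2m x a)) ∧
      (∀ x y z : g0, Q.l3 (Submodule.Quotient.mk x) (Submodule.Quotient.mk y)
          (Submodule.Quotient.mk z) = Submodule.Quotient.mk (L.l3 x y z)))
    ↔
    ((∀ x y : g0, x ∈ h0' → L.l2 x y ∈ h0') ∧
     (∀ (x : g0) (a : g1), x ∈ h0' → L.l2m x a ∈ h1') ∧
     (∀ (x : g0) (a : g1), a ∈ h1' → L.l2m x a ∈ h1') ∧
     (∀ x y z : g0, x ∈ h0' → L.l3 x y z ∈ h1')) := by
  classical
  obtain ⟨hdlin, h2a, h2b, h2ma, h2mb, h3a, h3b, h3c, hanti2, hanti3a, hanti3b,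
    hdl2m, hl2md, hdl3, hl3d, hjac⟩ := hL
  constructor
  · rintro ⟨Q, hQ, hQd, hQ2, hQ2m, hQ3⟩
    obtain ⟨-, -, q2b, q2ma, q2mb, -, -, q3c, -⟩ := hQ
    refine ⟨fun x y hx => ?_, fun x a hx => ?_, fun x a ha => ?_, fun x y z hx => ?_⟩
    · refine (Submodule.Quotient.mk_eq_zero _).1 ?_
      rw [← hQ2, (Submodule.Quotient.mk_eq_zero _).2 hx]
      exact (q2b _).map_zero
    · refine (Submodule.Quotient.mk_eq_zero _).1 ?_
      rw [← hQ2m, (Submodule.Quotient.mk_eq_zero _).2 hx]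
      exact (q2mb _).map_zero
    · refine (Submodule.Quotient.mk_eq_zero _).1 ?_
      rw [← hQ2m, (Submodule.Quotient.mk_eq_zero _).2 ha]
      exact (q2ma _).map_zero
    · refine (Submodule.Quotient.mk_eq_zero _).1 ?_
      rw [← hQ3, (Submodule.Quotient.mk_eq_zero _).2 hx]
      exact (q3c _ _).map_zero
  · rintro ⟨hI2, hI2m0, hI2m1, hI3⟩
    have hI2' : ∀ x y, y ∈ h0' → L.l2 x y ∈ h0' := fun x y hy => by
      rw [hanti2]; exact neg_mem (hI2 y x hy)
    have hI3b : ∀ x y z, y ∈ h0' → L.l3 x y z ∈ h1' := fun x y z hy => by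
      rw [hanti3a]; exact neg_mem (hI3 y x z hy)
    have hI3c : ∀ x y z, z ∈ h0' → L.l3 x y z ∈ h1' := fun x y z hz => by
      rw [hanti3b]; exact neg_mem (hI3b x z y hz)
    have hout0 : ∀ p : g0 ⧸ h0', Submodule.Quotient.mk p.out = p := fun p =>
      Quotient.out_eq' p
    have hout1 : ∀ p : g1 ⧸ h1', Submodule.Quotient.mk p.out = p := fun p =>
      Quotient.out_eq' p
    have hmem0 : ∀ x : g0, (Submodule.Quotient.mk x : g0 ⧸ h0').out - x ∈ h0' := fun x =>
      (Submodule.Quotient.eq h0').1 (by rw [hout0])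
    have hmem1 : ∀ a : g1, (Submodule.Quotient.mk a : g1 ⧸ h1').out - a ∈ h1' := fun a =>
      (Submodule.Quotient.eq h1').1 (by rw [hout1])
    set Q : LieTwoStr (g0 ⧸ h0') (g1 ⧸ h1') :=
      { d := fun p => Submodule.Quotient.mk (L.d p.out)
        l2 := fun p q => Submodule.Quotient.mk (L.l2 p.out q.out)
        l2m := fun p a => Submodule.Quotient.mk (L.l2m p.out a.out)
        l3 := fun p q r => Submodule.Quotient.mk (L.l3 p.out q.out r.out) } with hQdef
    have key_d : ∀ a : g1, Q.d (Submodule.Quotient.mk a) = Submodule.Quotient.mk (L.d a) := by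
      intro a
      refine (Submodule.Quotient.eq h0').2 ?_
      rw [← hdlin.map_sub]
      exact hd _ (hmem1 a)
    have key2 : ∀ x y : g0, Q.l2 (Submodule.Quotient.mk x) (Submodule.Quotient.mk y)
        = Submodule.Quotient.mk (L.l2 x y) := by
      intro x y
      refine (Submodule.Quotient.eq h0').2 ?_
      have e : L.l2 (Submodule.Quotient.mk x : g0 ⧸ h0').out
            (Submodule.Quotient.mk y : g0 ⧸ h0').out - L.l2 x y
          = L.l2 ((Submodule.Quotient.mk x : g0 ⧸ h0').out - x)
              (Submodule.Quotient.mk y : g0 ⧸ h0').out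
            + L.l2 x ((Submodule.Quotient.mk y : g0 ⧸ h0').out - y) := by
        rw [(h2b _).map_sub, (h2a _).map_sub]; abel
      rw [e]
      exact add_mem (hI2 _ _ (hmem0 x)) (hI2' _ _ (hmem0 y))
    have key2m : ∀ (x : g0) (a : g1),
        Q.l2m (Submodule.Quotient.mk x) (Submodule.Quotient.mk a)
        = Submodule.Quotient.mk (L.l2m x a) := by
      intro x a
      refine (Submodule.Quotient.eq h1').2 ?_
      have e : L.l2m (Submodule.Quotient.mk x : g0 ⧸ h0').out
            (Submodule.Quotient.mk a : g1 ⧸ h1').out - L.l2m x a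
          = L.l2m ((Submodule.Quotient.mk x : g0 ⧸ h0').out - x)
              (Submodule.Quotient.mk a : g1 ⧸ h1').out
            + L.l2m x ((Submodule.Quotient.mk a : g1 ⧸ h1').out - a) := by
        rw [(h2mb _).map_sub, (h2ma _).map_sub]; abel
      rw [e]
      exact add_mem (hI2m0 _ _ (hmem0 x)) (hI2m1 _ _ (hmem1 a))
    have key3 : ∀ x y z : g0,
        Q.l3 (Submodule.Quotient.mk x) (Submodule.Quotient.mk y) (Submodule.Quotient.mk z)
        = Submodule.Quotient.mk (L.l3 x y z) := by
      intro x y z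
      refine (Submodule.Quotient.eq h1').2 ?_
      set X := (Submodule.Quotient.mk x : g0 ⧸ h0').out
      set Y := (Submodule.Quotient.mk y : g0 ⧸ h0').out
      set Z := (Submodule.Quotient.mk z : g0 ⧸ h0').out
      have e : L.l3 X Y Z - L.l3 x y z
          = L.l3 (X - x) Y Z + L.l3 x (Y - y) Z + L.l3 x y (Z - z) := by
        rw [(h3c _ _).map_sub, (h3b _ _).map_sub, (h3a _ _).map_sub]; abel
      rw [e]
      exact add_mem (add_mem (hI3 _ _ _ (hmem0 x)) (hI3b _ _ _ (hmem0 y)))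
        (hI3c _ _ _ (hmem0 z))
    clear_value Q
    refine ⟨Q, ⟨?_, ?_, ?_, ?_, ?_, ?_, ?_, ?_, ?_, ?_, ?_, ?_, ?_, ?_, ?_, ?_⟩,
      key_d, key2, key2m, key3⟩
    · constructor
      · intro p q
        obtain ⟨a, rfl⟩ := Submodule.Quotient.mk_surjective _ p
        obtain ⟨b, rfl⟩ := Submodule.Quotient.mk_surjective _ q
        simp only [key_d, ← Submodule.Quotient.mk_add]
        exact congrArg _ (hdlin.map_add a b)
      · intro c p
        obtain ⟨a, rfl⟩ := Submodule.Quotient.mk_surjective _ p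
        simp only [key_d, ← Submodule.Quotient.mk_smul]
        exact congrArg _ (hdlin.map_smul c a)
    · intro p
      obtain ⟨x, rfl⟩ := Submodule.Quotient.mk_surjective _ p
      constructor
      · intro q r
        obtain ⟨y, rfl⟩ := Submodule.Quotient.mk_surjective _ q
        obtain ⟨z, rfl⟩ := Submodule.Quotient.mk_surjective _ r
        simp only [← Submodule.Quotient.mk_add, key2]
        exact congrArg _ ((h2a x).map_add y z)
      · intro c q
        obtain ⟨y, rfl⟩ := Submodule.Quotient.mk_surjective _ q
        simp only [← Submodule.Quotient.mk_smul, key2]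
        exact congrArg _ ((h2a x).map_smul c y)
    · intro q
      obtain ⟨y, rfl⟩ := Submodule.Quotient.mk_surjective _ q
      constructor
      · intro p r
        obtain ⟨x, rfl⟩ := Submodule.Quotient.mk_surjective _ p
        obtain ⟨z, rfl⟩ := Submodule.Quotient.mk_surjective _ r
        simp only [← Submodule.Quotient.mk_add, key2]
        exact congrArg _ ((h2b y).map_add x z)
      · intro c p
        obtain ⟨x, rfl⟩ := Submodule.Quotient.mk_surjective _ p
        simp only [← Submodule.Quotient.mk_smul, key2]
        exact congrArg _ ((h2b y).map_smul c x)
    · intro p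
      obtain ⟨x, rfl⟩ := Submodule.Quotient.mk_surjective _ p
      constructor
      · intro q r
        obtain ⟨a, rfl⟩ := Submodule.Quotient.mk_surjective _ q
        obtain ⟨b, rfl⟩ := Submodule.Quotient.mk_surjective _ r
        simp only [← Submodule.Quotient.mk_add, key2m]
        exact congrArg _ ((h2ma x).map_add a b)
      · intro c q
        obtain ⟨a, rfl⟩ := Submodule.Quotient.mk_surjective _ q
        simp only [← Submodule.Quotient.mk_smul, key2m]
        exact congrArg _ ((h2ma x).map_smul c a)
    · intro q
      obtain ⟨a, rfl⟩ := Submodule.Quotient.mk_surjective _ q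
      constructor
      · intro p r
        obtain ⟨x, rfl⟩ := Submodule.Quotient.mk_surjective _ p
        obtain ⟨y, rfl⟩ := Submodule.Quotient.mk_surjective _ r
        simp only [← Submodule.Quotient.mk_add, key2m]
        exact congrArg _ ((h2mb a).map_add x y)
      · intro c p
        obtain ⟨x, rfl⟩ := Submodule.Quotient.mk_surjective _ p
        simp only [← Submodule.Quotient.mk_smul, key2m]
        exact congrArg _ ((h2mb a).map_smul c x)
    · intro p q
      obtain ⟨x, rfl⟩ := Submodule.Quotient.mk_surjective _ p
      obtain ⟨y, rfl⟩ := Submodule.Quotient.mk_surjective _ q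
      constructor
      · intro r s
        obtain ⟨z, rfl⟩ := Submodule.Quotient.mk_surjective _ r
        obtain ⟨w, rfl⟩ := Submodule.Quotient.mk_surjective _ s
        simp only [← Submodule.Quotient.mk_add, key3]
        exact congrArg _ ((h3a x y).map_add z w)
      · intro c r
        obtain ⟨z, rfl⟩ := Submodule.Quotient.mk_surjective _ r
        simp only [← Submodule.Quotient.mk_smul, key3]
        exact congrArg _ ((h3a x y).map_smul c z)
    · intro p r
      obtain ⟨x, rfl⟩ := Submodule.Quotient.mk_surjective _ p
      obtain ⟨z, rfl⟩ := Submodule.Quotient.mk_surjective _ r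
      constructor
      · intro q s
        obtain ⟨y, rfl⟩ := Submodule.Quotient.mk_surjective _ q
        obtain ⟨w, rfl⟩ := Submodule.Quotient.mk_surjective _ s
        simp only [← Submodule.Quotient.mk_add, key3]
        exact congrArg _ ((h3b x z).map_add y w)
      · intro c q
        obtain ⟨y, rfl⟩ := Submodule.Quotient.mk_surjective _ q
        simp only [← Submodule.Quotient.mk_smul, key3]
        exact congrArg _ ((h3b x z).map_smul c y)
    · intro q r
      obtain ⟨y, rfl⟩ := Submodule.Quotient.mk_surjective _ q
      obtain ⟨z, rfl⟩ := Submodule.Quotient.mk_surjective _ r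
      constructor
      · intro p s
        obtain ⟨x, rfl⟩ := Submodule.Quotient.mk_surjective _ p
        obtain ⟨w, rfl⟩ := Submodule.Quotient.mk_surjective _ s
        simp only [← Submodule.Quotient.mk_add, key3]
        exact congrArg _ ((h3c y z).map_add x w)
      · intro c p
        obtain ⟨x, rfl⟩ := Submodule.Quotient.mk_surjective _ p
        simp only [← Submodule.Quotient.mk_smul, key3]
        exact congrArg _ ((h3c y z).map_smul c x)
    · intro p q
      obtain ⟨x, rfl⟩ := Submodule.Quotient.mk_surjective _ p
      obtain ⟨y, rfl⟩ := Submodule.Quotient.mk_surjective _ q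
      simp only [key2, ← Submodule.Quotient.mk_neg]
      exact congrArg _ (hanti2 x y)
    · intro p q r
      obtain ⟨x, rfl⟩ := Submodule.Quotient.mk_surjective _ p
      obtain ⟨y, rfl⟩ := Submodule.Quotient.mk_surjective _ q
      obtain ⟨z, rfl⟩ := Submodule.Quotient.mk_surjective _ r
      simp only [key3, ← Submodule.Quotient.mk_neg]
      exact congrArg _ (hanti3a x y z)
    · intro p q r
      obtain ⟨x, rfl⟩ := Submodule.Quotient.mk_surjective _ p
      obtain ⟨y, rfl⟩ := Submodule.Quotient.mk_surjective _ q
      obtain ⟨z, rfl⟩ := Submodule.Quotient.mk_surjective _ r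
      simp only [key3, ← Submodule.Quotient.mk_neg]
      exact congrArg _ (hanti3b x y z)
    · intro p q
      obtain ⟨x, rfl⟩ := Submodule.Quotient.mk_surjective _ p
      obtain ⟨a, rfl⟩ := Submodule.Quotient.mk_surjective _ q
      simp only [key2m, key_d, key2]
      exact congrArg _ (hdl2m x a)
    · intro p q
      obtain ⟨a, rfl⟩ := Submodule.Quotient.mk_surjective _ p
      obtain ⟨b, rfl⟩ := Submodule.Quotient.mk_surjective _ q
      simp only [key_d, key2m, ← Submodule.Quotient.mk_neg]
      exact congrArg _ (hl2md a b)
    · intro p q r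
      obtain ⟨x, rfl⟩ := Submodule.Quotient.mk_surjective _ p
      obtain ⟨y, rfl⟩ := Submodule.Quotient.mk_surjective _ q
      obtain ⟨z, rfl⟩ := Submodule.Quotient.mk_surjective _ r
      simp only [key3, key_d, key2, ← Submodule.Quotient.mk_sub]
      exact congrArg _ (hdl3 x y z)
    · intro p q r
      obtain ⟨x, rfl⟩ := Submodule.Quotient.mk_surjective _ p
      obtain ⟨y, rfl⟩ := Submodule.Quotient.mk_surjective _ q
      obtain ⟨a, rfl⟩ := Submodule.Quotient.mk_surjective _ r
      simp only [key_d, key3, key2m, key2, ← Submodule.Quotient.mk_sub]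
      exact congrArg _ (hl3d x y a)
    · intro p q r s
      obtain ⟨x, rfl⟩ := Submodule.Quotient.mk_surjective _ p
      obtain ⟨y, rfl⟩ := Submodule.Quotient.mk_surjective _ q
      obtain ⟨z, rfl⟩ := Submodule.Quotient.mk_surjective _ r
      obtain ⟨w, rfl⟩ := Submodule.Quotient.mk_surjective _ s
      simp only [key2, key2m, key3, ← Submodule.Quotient.mk_add,
        ← Submodule.Quotient.mk_sub]
      exact congrArg _ (hjac x y z w)
end

section
/- Let g be a Lie 2-algebra and m a g-module, let φ: m → g be a chain map and σ: g₀ ∧ m₀ → g₁ a linear map. Assume: (a) Π = ((id,φ₀),(id,φ₁),(0,σ,0)): g ⋉ m → g is a Lie 2-algebra homomorphism from the semidirect product; (b) φ(α) ▷ β = −φ(β) ▷ α for all α, β ∈ m; (c) (φ₀α, φ₀β) ▷ γ + σ(φ₀α, β) ▷ γ = −(φ₀α, φ₀γ) ▷ β − σ(φ₀α, γ) ▷ β for all α,β,γ ∈ m₀; (d) (x, φ₀β) ▷ γ + σ(x,β) ▷ γ = −(x, φ₀γ) ▷ β − σ(x,γ) ▷ β for all β,γ ∈ m₀, x ∈ g₀;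 (e) σ(φ₀α, β) = σ(α, φ₀β) for all α,β ∈ m₀. Then there is a unique Lie 2-algebra structure on m with l̃₂(α,β) = φ(α) ▷ β and l̃₃(α,β,γ) = −(φ₀α, φ₀β) ▷ γ − σ(φ₀α,β) ▷ γ, making (m, g, φ̂, φ, σ) a crossed module of Lie 2-algebras. -/
universe u

variable (K : Type u) [Field K]
variable {g0 g1 h0 h1 m0 m1 : Type u}
  [AddCommGroup g0] [Module K g0] [AddCommGroup g1] [Module K g1]
  [AddCommGroup h0] [Module K h0] [AddCommGroup h1] [Module K h1]
  [AddCommGroup m0] [Module K m0] [AddCommGroup m1] [Module K m1]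

variable {K}

variable (K)

set_option maxHeartbeats 4000000 in
/-- Let `g` be a Lie 2-algebra, `m` a `g`-module, `ϕ : m → g` a chain map
and `σ : g₀ ∧ m₀ → g₁`, such that (a) `Π = ((id,ϕ₀),(id,ϕ₁),(0,σ,0)) : g ⋉ m → g` is a
Lie 2-algebra homomorphism and conditions (b)–(e) hold.  Then there is a unique Lie
2-algebra structure on `m` with `l̃₂(α,β) = ϕ(α)▷β` and
`l̃₃(α,β,γ) = −(ϕ₀α,ϕ₀β)▷γ − σ(ϕ₀α,β)▷γ`, making `(m, g, φ̂, ϕ, σ)` a crossed module. -/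
theorem crossed_module_from_data (L : LieTwoStr g0 g1) (hL : IsLieTwoAlgebra K L)
    (dm : m1 → m0) (hdm : IsLinearMap K dm)
    (A : TwoAction g0 g1 m0 m1) (hA : IsAction K L dm A)
    (p0 : m0 → g0) (p1 : m1 → g1)
    (hp0 : IsLinearMap K p0) (hp1 : IsLinearMap K p1)
    (hpchain : ∀ ξ : m1, p0 (dm ξ) = L.d (p1 ξ))
    (σ : g0 → m0 → g1)
    (hσ0 : ∀ x, IsLinearMap K (σ x)) (hσ0' : ∀ α, IsLinearMap K (fun x => σ x α))
    -- (a) Π is a Lie 2-algebra homomorphism from the semidirect product g ⋉ m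
    (ha : IsHom K (crossedProduct L (abelianTwo dm) A (fun _ _ _ => 0)) L
      ⟨fun p => p.1 + p0 p.2, fun q => q.1 + p1 q.2,
       fun p q => σ p.1 q.2 - σ q.1 p.2⟩)
    -- (b) ϕ(α) ▷ β = −ϕ(β) ▷ α
    (hb : ∀ α β : m0, A.r0 (p0 α) β = - A.r0 (p0 β) α)
    (hb' : ∀ (α : m0) (ξ : m1), A.r0' (p0 α) ξ = - A.r1 (p1 ξ) α)
    -- (c)
    (hc : ∀ α β γ : m0,
      A.r2 (p0 α) (p0 β) γ + A.r1 (σ (p0 α) β) γ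
        = - A.r2 (p0 α) (p0 γ) β - A.r1 (σ (p0 α) γ) β)
    -- (d)
    (hd : ∀ (x : g0) (β γ : m0),
      A.r2 x (p0 β) γ + A.r1 (σ x β) γ = - A.r2 x (p0 γ) β - A.r1 (σ x γ) β)
    -- (e) σ(ϕ₀α, β) = σ(α, ϕ₀β)
    (he : ∀ α β : m0, σ (p0 α) β = - σ (p0 β) α) :
    IsCrossedModule K L
      ⟨dm, fun α β => A.r0 (p0 α) β, fun α ξ => A.r0' (p0 α) ξ,
        fun α β γ => - A.r2 (p0 α) (p0 β) γ - A.r1 (σ (p0 α) β) γ⟩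
      A (fun x β γ => - A.r2 x (p0 β) γ - A.r1 (σ x β) γ)
      p0 p1 (fun α β => σ (p0 α) β) σ ∧
    -- uniqueness of the Lie 2-algebra structure on m
    (∀ M' : LieTwoStr m0 m1, M'.d = dm →
      (∀ α β, M'.l2 α β = A.r0 (p0 α) β) →
      (∀ α ξ, M'.l2m α ξ = A.r0' (p0 α) ξ) →
      (∀ α β γ, M'.l3 α β γ = - A.r2 (p0 α) (p0 β) γ - A.r1 (σ (p0 α) β) γ) →
      M' = ⟨dm, fun α β => A.r0 (p0 α) β, fun α ξ => A.r0' (p0 α) ξ,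
        fun α β γ => - A.r2 (p0 α) (p0 β) γ - A.r1 (σ (p0 α) β) γ⟩) := by
  obtain ⟨hLd, hL2a, hL2b, hL2ma, hL2mb, hL3a, hL3b, hL3c, hL9, hL10, hL11, hL12,
    hL13, hL14, hL15, hL16⟩ := id hL
  obtain ⟨hA1, hA2, hA3, hA4, hA5, hA6, hA7, hA8, hA9, hA10, hA11, hA12, hA13, hA14,
    hA15, hA16, hA17⟩ := id hA
  obtain ⟨hh1, hh2, hh3, hh4, hh5, hh6, hh7, hh8, hh9⟩ := ha
  -- linearity lemmas
  have dm_add : ∀ u v, dm (u + v) = dm u + dm v := hdm.map_add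
  have dm_neg : ∀ u, dm (-u) = -dm u := hdm.map_neg
  have dm_sub : ∀ u v, dm (u - v) = dm u - dm v := hdm.map_sub
  have p0_add : ∀ u v, p0 (u + v) = p0 u + p0 v := hp0.map_add
  have p0_neg : ∀ u, p0 (-u) = -p0 u := hp0.map_neg
  have p0_sub : ∀ u v, p0 (u - v) = p0 u - p0 v := hp0.map_sub
  have p1_add : ∀ u v, p1 (u + v) = p1 u + p1 v := hp1.map_add
  have p1_neg : ∀ u, p1 (-u) = -p1 u := hp1.map_neg
  have p1_sub : ∀ u v, p1 (u - v) = p1 u - p1 v := hp1.map_sub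
  have Ld_add : ∀ u v, L.d (u + v) = L.d u + L.d v := hLd.map_add
  have Ld_neg : ∀ u, L.d (-u) = -L.d u := hLd.map_neg
  have Ld_sub : ∀ u v, L.d (u - v) = L.d u - L.d v := hLd.map_sub
  have l2_add1 : ∀ u v y, L.l2 (u + v) y = L.l2 u y + L.l2 v y :=
    fun u v y => (hL2b y).map_add u v
  have l2_neg1 : ∀ u y, L.l2 (-u) y = -L.l2 u y := fun u y => (hL2b y).map_neg u
  have l2_sub1 : ∀ u v y, L.l2 (u - v) y = L.l2 u y - L.l2 v y :=
    fun u v y => (hL2b y).map_sub u v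
  have l2_add2 : ∀ x u v, L.l2 x (u + v) = L.l2 x u + L.l2 x v :=
    fun x u v => (hL2a x).map_add u v
  have l2_neg2 : ∀ x u, L.l2 x (-u) = -L.l2 x u := fun x u => (hL2a x).map_neg u
  have l2_sub2 : ∀ x u v, L.l2 x (u - v) = L.l2 x u - L.l2 x v :=
    fun x u v => (hL2a x).map_sub u v
  have l2m_add1 : ∀ u v a, L.l2m (u + v) a = L.l2m u a + L.l2m v a :=
    fun u v a => (hL2mb a).map_add u v
  have l2m_neg1 : ∀ u a, L.l2m (-u) a = -L.l2m u a := fun u a => (hL2mb a).map_neg u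
  have l2m_sub1 : ∀ u v a, L.l2m (u - v) a = L.l2m u a - L.l2m v a :=
    fun u v a => (hL2mb a).map_sub u v
  have l2m_add2 : ∀ x u v, L.l2m x (u + v) = L.l2m x u + L.l2m x v :=
    fun x u v => (hL2ma x).map_add u v
  have l2m_neg2 : ∀ x u, L.l2m x (-u) = -L.l2m x u := fun x u => (hL2ma x).map_neg u
  have l2m_sub2 : ∀ x u v, L.l2m x (u - v) = L.l2m x u - L.l2m x v :=
    fun x u v => (hL2ma x).map_sub u v
  have sg_add1 : ∀ u v w, σ (u + v) w = σ u w + σ v w := fun u v w => (hσ0' w).map_add u v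
  have sg_neg1 : ∀ u w, σ (-u) w = -σ u w := fun u w => (hσ0' w).map_neg u
  have sg_sub1 : ∀ u v w, σ (u - v) w = σ u w - σ v w := fun u v w => (hσ0' w).map_sub u v
  have sg_add2 : ∀ x u v, σ x (u + v) = σ x u + σ x v := fun x u v => (hσ0 x).map_add u v
  have sg_neg2 : ∀ x u, σ x (-u) = -σ x u := fun x u => (hσ0 x).map_neg u
  have sg_sub2 : ∀ x u v, σ x (u - v) = σ x u - σ x v := fun x u v => (hσ0 x).map_sub u v
  have r0_add1 : ∀ u v w, A.r0 (u + v) w = A.r0 u w + A.r0 v w :=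
    fun u v w => (hA2 w).map_add u v
  have r0_neg1 : ∀ u w, A.r0 (-u) w = -A.r0 u w := fun u w => (hA2 w).map_neg u
  have r0_sub1 : ∀ u v w, A.r0 (u - v) w = A.r0 u w - A.r0 v w :=
    fun u v w => (hA2 w).map_sub u v
  have r0_add2 : ∀ x u v, A.r0 x (u + v) = A.r0 x u + A.r0 x v :=
    fun x u v => (hA1 x).map_add u v
  have r0_neg2 : ∀ x u, A.r0 x (-u) = -A.r0 x u := fun x u => (hA1 x).map_neg u
  have r0_sub2 : ∀ x u v, A.r0 x (u - v) = A.r0 x u - A.r0 x v :=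
    fun x u v => (hA1 x).map_sub u v
  have q0_add1 : ∀ u v w, A.r0' (u + v) w = A.r0' u w + A.r0' v w :=
    fun u v w => (hA4 w).map_add u v
  have q0_neg1 : ∀ u w, A.r0' (-u) w = -A.r0' u w := fun u w => (hA4 w).map_neg u
  have q0_sub1 : ∀ u v w, A.r0' (u - v) w = A.r0' u w - A.r0' v w :=
    fun u v w => (hA4 w).map_sub u v
  have q0_add2 : ∀ x u v, A.r0' x (u + v) = A.r0' x u + A.r0' x v :=
    fun x u v => (hA3 x).map_add u v
  have q0_neg2 : ∀ x u, A.r0' x (-u) = -A.r0' x u := fun x u => (hA3 x).map_neg u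
  have q0_sub2 : ∀ x u v, A.r0' x (u - v) = A.r0' x u - A.r0' x v :=
    fun x u v => (hA3 x).map_sub u v
  have r1_add1 : ∀ u v w, A.r1 (u + v) w = A.r1 u w + A.r1 v w :=
    fun u v w => (hA6 w).map_add u v
  have r1_neg1 : ∀ u w, A.r1 (-u) w = -A.r1 u w := fun u w => (hA6 w).map_neg u
  have r1_sub1 : ∀ u v w, A.r1 (u - v) w = A.r1 u w - A.r1 v w :=
    fun u v w => (hA6 w).map_sub u v
  have r1_add2 : ∀ a u v, A.r1 a (u + v) = A.r1 a u + A.r1 a v :=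
    fun a u v => (hA5 a).map_add u v
  have r1_neg2 : ∀ a u, A.r1 a (-u) = -A.r1 a u := fun a u => (hA5 a).map_neg u
  have r1_sub2 : ∀ a u v, A.r1 a (u - v) = A.r1 a u - A.r1 a v :=
    fun a u v => (hA5 a).map_sub u v
  have r2_add1 : ∀ u v y w, A.r2 (u + v) y w = A.r2 u y w + A.r2 v y w :=
    fun u v y w => (hA9 y w).map_add u v
  have r2_neg1 : ∀ u y w, A.r2 (-u) y w = -A.r2 u y w := fun u y w => (hA9 y w).map_neg u
  have r2_sub1 : ∀ u v y w, A.r2 (u - v) y w = A.r2 u y w - A.r2 v y w :=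
    fun u v y w => (hA9 y w).map_sub u v
  have r2_add2 : ∀ x u v w, A.r2 x (u + v) w = A.r2 x u w + A.r2 x v w :=
    fun x u v w => (hA8 x w).map_add u v
  have r2_neg2 : ∀ x u w, A.r2 x (-u) w = -A.r2 x u w := fun x u w => (hA8 x w).map_neg u
  have r2_sub2 : ∀ x u v w, A.r2 x (u - v) w = A.r2 x u w - A.r2 x v w :=
    fun x u v w => (hA8 x w).map_sub u v
  have r2_add3 : ∀ x y u v, A.r2 x y (u + v) = A.r2 x y u + A.r2 x y v :=
    fun x y u v => (hA7 x y).map_add u v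
  have r2_neg3 : ∀ x y u, A.r2 x y (-u) = -A.r2 x y u := fun x y u => (hA7 x y).map_neg u
  have r2_sub3 : ∀ x y u v, A.r2 x y (u - v) = A.r2 x y u - A.r2 x y v :=
    fun x y u v => (hA7 x y).map_sub u v
  -- zero lemmas
  have dm_zero : dm 0 = 0 := hdm.map_zero
  have p0_zero : p0 0 = 0 := hp0.map_zero
  have p1_zero : p1 0 = 0 := hp1.map_zero
  have Ld_zero : L.d 0 = 0 := hLd.map_zero
  have l2_zero1 : ∀ y, L.l2 0 y = 0 := fun y => (hL2b y).map_zero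
  have l2_zero2 : ∀ x, L.l2 x 0 = 0 := fun x => (hL2a x).map_zero
  have l2m_zero1 : ∀ a, L.l2m 0 a = 0 := fun a => (hL2mb a).map_zero
  have l2m_zero2 : ∀ x, L.l2m x 0 = 0 := fun x => (hL2ma x).map_zero
  have l3_zero3 : ∀ x y, L.l3 x y 0 = 0 := fun x y => (hL3a x y).map_zero
  have sg_zero1 : ∀ w, σ 0 w = 0 := fun w => (hσ0' w).map_zero
  have sg_zero2 : ∀ x, σ x 0 = 0 := fun x => (hσ0 x).map_zero
  have r0_zero1 : ∀ w, A.r0 0 w = 0 := fun w => (hA2 w).map_zero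
  have r0_zero2 : ∀ x, A.r0 x 0 = 0 := fun x => (hA1 x).map_zero
  have q0_zero1 : ∀ w, A.r0' 0 w = 0 := fun w => (hA4 w).map_zero
  have q0_zero2 : ∀ x, A.r0' x 0 = 0 := fun x => (hA3 x).map_zero
  have r1_zero1 : ∀ w, A.r1 0 w = 0 := fun w => (hA6 w).map_zero
  have r1_zero2 : ∀ a, A.r1 a 0 = 0 := fun a => (hA5 a).map_zero
  have r2_zero2 : ∀ x w, A.r2 x 0 w = 0 := fun x w => (hA8 x w).map_zero
  have r2_zero3 : ∀ x y, A.r2 x y 0 = 0 := fun x y => (hA7 x y).map_zero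
  -- the homomorphism properties of Π, extracted from ha
  have P1 : ∀ x α, p0 (A.r0 x α) = L.l2 x (p0 α) + L.d (σ x α) := by
    intro x α
    have h := hh7 (x, 0) (0, α)
    simp only [crossedProduct, abelianTwo] at h
    simp only [p0_zero, p1_zero, dm_zero, Ld_zero, sg_zero1, sg_zero2, r0_zero1,
      r0_zero2, q0_zero1, q0_zero2, r1_zero1, r1_zero2, r2_zero2, r2_zero3, l2_zero1,
      l2_zero2, l2m_zero1, l2m_zero2, l3_zero3, add_zero, zero_add, sub_zero, zero_sub,
      neg_zero, neg_neg, p1_add, p1_sub, p1_neg, p0_add, p0_sub, p0_neg, Ld_add, Ld_sub,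
      Ld_neg, sg_neg2, sg_add2, sg_sub2, l2m_neg2, l2m_add2, l2m_sub2] at h
    first
    | linear_combination (norm := abel1) h
    | linear_combination (norm := abel1) h.symm
  have P2 : ∀ a α, σ (L.d a) α = p1 (A.r1 a α) + L.l2m (p0 α) a := by
    intro a α
    have h := hh8 (0, α) (a, 0)
    simp only [crossedProduct, abelianTwo] at h
    simp only [p0_zero, p1_zero, dm_zero, Ld_zero, sg_zero1, sg_zero2, r0_zero1,
      r0_zero2, q0_zero1, q0_zero2, r1_zero1, r1_zero2, r2_zero2, r2_zero3, l2_zero1,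
      l2_zero2, l2m_zero1, l2m_zero2, l3_zero3, add_zero, zero_add, sub_zero, zero_sub,
      neg_zero, neg_neg, p1_add, p1_sub, p1_neg, p0_add, p0_sub, p0_neg, Ld_add, Ld_sub,
      Ld_neg, sg_neg2, sg_add2, sg_sub2, l2m_neg2, l2m_add2, l2m_sub2] at h
    first
    | linear_combination (norm := abel1) h
    | linear_combination (norm := abel1) h.symm
  have P3 : ∀ x ξ, σ x (dm ξ) = p1 (A.r0' x ξ) - L.l2m x (p1 ξ) := by
    intro x ξ
    have h := hh8 (x, 0) (0, ξ)
    simp only [crossedProduct, abelianTwo] at h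
    simp only [p0_zero, p1_zero, dm_zero, Ld_zero, sg_zero1, sg_zero2, r0_zero1,
      r0_zero2, q0_zero1, q0_zero2, r1_zero1, r1_zero2, r2_zero2, r2_zero3, l2_zero1,
      l2_zero2, l2m_zero1, l2m_zero2, l3_zero3, add_zero, zero_add, sub_zero, zero_sub,
      neg_zero, neg_neg, p1_add, p1_sub, p1_neg, p0_add, p0_sub, p0_neg, Ld_add, Ld_sub,
      Ld_neg, sg_neg2, sg_add2, sg_sub2, l2m_neg2, l2m_add2, l2m_sub2] at h
    first
    | linear_combination (norm := abel1) h
    | linear_combination (norm := abel1) h.symm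
  have P4 : ∀ x y α, L.l2m x (σ y α) - L.l2m y (σ x α) + L.l3 x y (p0 α)
      = σ (L.l2 x y) α - σ x (A.r0 y α) + σ y (A.r0 x α) - p1 (A.r2 x y α) := by
    intro x y α
    have h := hh9 (x, 0) (y, 0) (0, α)
    simp only [crossedProduct, abelianTwo] at h
    simp only [p0_zero, p1_zero, dm_zero, Ld_zero, sg_zero1, sg_zero2, r0_zero1,
      r0_zero2, q0_zero1, q0_zero2, r1_zero1, r1_zero2, r2_zero2, r2_zero3, l2_zero1,
      l2_zero2, l2m_zero1, l2m_zero2, l3_zero3, add_zero, zero_add, sub_zero, zero_sub,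
      neg_zero, neg_neg, p1_add, p1_sub, p1_neg, p0_add, p0_sub, p0_neg, Ld_add, Ld_sub,
      Ld_neg, sg_neg2, sg_add2, sg_sub2, l2m_neg2, l2m_add2, l2m_sub2] at h
    first
    | linear_combination (norm := abel1) h
    | linear_combination (norm := abel1) h.symm
  -- structural rewrite rules
  have S1 : ∀ x α, p0 (A.r0 x α) = L.l2 x (p0 α) + L.d (σ x α) := P1
  have S4 : ∀ ξ α, A.r1 (p1 ξ) α = -A.r0' (p0 α) ξ := fun ξ α => by
    rw [hb' α ξ, neg_neg]
  have S5 : ∀ x y w, A.r0 (L.l2 x y) w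
      = dm (A.r2 x y w) + A.r0 x (A.r0 y w) - A.r0 y (A.r0 x w) := fun x y w => by
    first
    | linear_combination (norm := abel1) hA14 x y w
    | linear_combination (norm := abel1) (hA14 x y w).symm
  have S7 : ∀ x y ξ, A.r0' (L.l2 x y) ξ
      = A.r2 x y (dm ξ) + A.r0' x (A.r0' y ξ) - A.r0' y (A.r0' x ξ) := fun x y ξ => by
    first
    | linear_combination (norm := abel1) hA15 x y ξ
    | linear_combination (norm := abel1) (hA15 x y ξ).symm
  have S9 : ∀ x a w, A.r1 (L.l2m x a) w
      = A.r2 x (L.d a) w + A.r0' x (A.r1 a w) - A.r1 a (A.r0 x w) := fun x a w => by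
    first
    | linear_combination (norm := abel1) hA16 x a w
    | linear_combination (norm := abel1) (hA16 x a w).symm
  have S10 : ∀ a x w, A.r2 (L.d a) x w = -A.r2 x (L.d a) w := fun a x w => hA10 _ _ _
  have S11 : ∀ x y z w, A.r1 (L.l3 x y z) w
      = A.r0' x (A.r2 y z w) - A.r2 y z (A.r0 x w) + A.r0' y (A.r2 z x w)
        - A.r2 z x (A.r0 y w) + A.r0' z (A.r2 x y w) - A.r2 x y (A.r0 z w)
        - A.r2 (L.l2 x y) z w - A.r2 (L.l2 y z) x w - A.r2 (L.l2 z x) y w :=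
    fun x y z w => by
    first
    | linear_combination (norm := abel1) hA17 x y z w
    | linear_combination (norm := abel1) (hA17 x y z w).symm
  have P1r1 : ∀ a w, p1 (A.r1 a w) = σ (L.d a) w - L.l2m (p0 w) a := fun a w => by
    first
    | linear_combination (norm := abel1) P2 a w
    | linear_combination (norm := abel1) (P2 a w).symm
  have P1r2 : ∀ x y w, p1 (A.r2 x y w)
      = -L.l2m x (σ y w) + L.l2m y (σ x w) + σ (L.l2 x y) w - σ x (A.r0 y w)
        + σ y (A.r0 x w) - L.l3 x y (p0 w) := fun x y w => by
    first
    | linear_combination (norm := abel1) P4 x y w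
    | linear_combination (norm := abel1) (P4 x y w).symm
  have P1r0p : ∀ x ξ, p1 (A.r0' x ξ) = σ x (dm ξ) + L.l2m x (p1 ξ) := fun x ξ => by
    first
    | linear_combination (norm := abel1) P3 x ξ
    | linear_combination (norm := abel1) (P3 x ξ).symm
  have SGL2 : ∀ x y w, σ (L.l2 x y) w
      = L.l2m x (σ y w) - L.l2m y (σ x w) + L.l3 x y (p0 w) + σ x (A.r0 y w)
        - σ y (A.r0 x w) + p1 (A.r2 x y w) := fun x y w => by
    first
    | linear_combination (norm := abel1) P4 x y w
    | linear_combination (norm := abel1) (P4 x y w).symm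
  have Rsg1 : ∀ a b e, A.r1 (σ (L.d a) b) e
      = A.r0' (p0 b) (A.r1 a e) - A.r0' (p0 e) (A.r1 a b) - A.r1 a (A.r0 (p0 b) e)
        + A.r2 (p0 b) (L.d a) e := fun a b e => by
    rw [P2 a b, r1_add1, S4, S9]; abel
  have Rsg2 : ∀ x y b e, A.r1 (σ (L.l2 x y) b) e
      = A.r0' (p0 b) (A.r2 x y e) - A.r0' (p0 e) (A.r2 x y b) + A.r0' x (A.r1 (σ y b) e) + A.r0' x (A.r2 y (p0 b) e) - A.r0' y (A.r1 (σ x b) e) + A.r0' y (A.r2 (p0 b) x e) + A.r1 (σ x (A.r0 y b)) e + A.r1 (σ x b) (A.r0 y e) - A.r1 (σ y (A.r0 x b)) e - A.r1 (σ y b) (A.r0 x e) - A.r2 (L.l2 (p0 b) x) y e - A.r2 (L.l2 x y) (p0 b) e - A.r2 (L.l2 y (p0 b)) x e - A.r2 (p0 b) x (A.r0 y e) + A.r2 x (L.d (σ y b)) e - A.r2 x y (A.r0 (p0 b) e) - A.r2 y (L.d (σ x b)) e - A.r2 y (p0 b) (A.r0 x e) := fun x y b e => by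
    rw [SGL2 x y b]
    simp only [r1_add1, r1_sub1, r1_neg1, S4, S9, S11]
    abel
  constructor
  · refine ⟨hL, ?_, ?_, ?_, hσ0, hσ0', ?_, ?_, ?_, ?_, ?_, ?_, ?_, ?_, ?_, ?_, ?_⟩
    · -- M is a Lie 2-algebra
      refine ⟨hdm, fun α => hA1 (p0 α), ?_, fun α => hA3 (p0 α), ?_, ?_, ?_, ?_,
        hb, ?_, ?_, fun x a => hA11 (p0 x) a, ?_, ?_, ?_, ?_⟩
      · refine fun y => ⟨fun u v => ?_, fun c u => ?_⟩
        · show A.r0 (p0 (u + v)) y = A.r0 (p0 u) y + A.r0 (p0 v) y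
          rw [p0_add, r0_add1]
        · show A.r0 (p0 (c • u)) y = c • A.r0 (p0 u) y
          rw [hp0.map_smul]; exact (hA2 y).map_smul c (p0 u)
      · refine fun a => ⟨fun u v => ?_, fun c u => ?_⟩
        · show A.r0' (p0 (u + v)) a = A.r0' (p0 u) a + A.r0' (p0 v) a
          rw [p0_add, q0_add1]
        · show A.r0' (p0 (c • u)) a = c • A.r0' (p0 u) a
          rw [hp0.map_smul]; exact (hA4 a).map_smul c (p0 u)
      · refine fun α β => ⟨fun u v => ?_, fun c u => ?_⟩
        · show -A.r2 (p0 α) (p0 β) (u + v) - A.r1 (σ (p0 α) β) (u + v) = _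
          rw [r2_add3, r1_add2]; dsimp only; abel
        · show -A.r2 (p0 α) (p0 β) (c • u) - A.r1 (σ (p0 α) β) (c • u) = _
          rw [(hA7 (p0 α) (p0 β)).map_smul, (hA5 (σ (p0 α) β)).map_smul]
          dsimp only; module
      · refine fun α γ => ⟨fun u v => ?_, fun c u => ?_⟩
        · show -A.r2 (p0 α) (p0 (u + v)) γ - A.r1 (σ (p0 α) (u + v)) γ = _
          rw [p0_add, r2_add2, sg_add2, r1_add1]; dsimp only; abel
        · show -A.r2 (p0 α) (p0 (c • u)) γ - A.r1 (σ (p0 α) (c • u)) γ = _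
          rw [hp0.map_smul, (hA8 (p0 α) γ).map_smul, (hσ0 (p0 α)).map_smul,
            (hA6 γ).map_smul]
          dsimp only; module
      · refine fun β γ => ⟨fun u v => ?_, fun c u => ?_⟩
        · show -A.r2 (p0 (u + v)) (p0 β) γ - A.r1 (σ (p0 (u + v)) β) γ = _
          rw [p0_add, r2_add1, sg_add1, r1_add1]; dsimp only; abel
        · show -A.r2 (p0 (c • u)) (p0 β) γ - A.r1 (σ (p0 (c • u)) β) γ = _
          rw [hp0.map_smul, (hA9 (p0 β) γ).map_smul, (hσ0' β).map_smul,
            (hA6 γ).map_smul]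
          dsimp only; module
      · -- l3 antisym in first two args
        intro α β γ
        try dsimp only
        try simp only [S1, S4, S5, hA12, S7, hA13, S9, S10, S11, P1r1, P1r2, P1r0p, Rsg1, Rsg2, dm_add, dm_neg, dm_sub, p0_add, p0_neg, p0_sub, p1_add, p1_neg, p1_sub, Ld_add, Ld_neg, Ld_sub, l2_add1, l2_neg1, l2_sub1, l2_add2, l2_neg2, l2_sub2, l2m_add1, l2m_neg1, l2m_sub1, l2m_add2, l2m_neg2, l2m_sub2, sg_add1, sg_neg1, sg_sub1, sg_add2, sg_neg2, sg_sub2, r0_add1, r0_neg1, r0_sub1, r0_add2, r0_neg2, r0_sub2, q0_add1, q0_neg1, q0_sub1, q0_add2, q0_neg2, q0_sub2, r1_add1, r1_neg1, r1_sub1, r1_add2, r1_neg2, r1_sub2, r2_add1, r2_neg1, r2_sub1, r2_add2, r2_neg2, r2_sub2, r2_add3, r2_neg3, r2_sub3]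
        simp only [he β α, hA10 (p0 β) (p0 α), dm_add, dm_neg, dm_sub, p0_add, p0_neg, p0_sub, p1_add, p1_neg, p1_sub, Ld_add, Ld_neg, Ld_sub, l2_add1, l2_neg1, l2_sub1, l2_add2, l2_neg2, l2_sub2, l2m_add1, l2m_neg1, l2m_sub1, l2m_add2, l2m_neg2, l2m_sub2, sg_add1, sg_neg1, sg_sub1, sg_add2, sg_neg2, sg_sub2, r0_add1, r0_neg1, r0_sub1, r0_add2, r0_neg2, r0_sub2, q0_add1, q0_neg1, q0_sub1, q0_add2, q0_neg2, q0_sub2, r1_add1, r1_neg1, r1_sub1, r1_add2, r1_neg2, r1_sub2, r2_add1, r2_neg1, r2_sub1, r2_add2, r2_neg2, r2_sub2, r2_add3, r2_neg3, r2_sub3]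
        abel
      · -- l3 antisym in last two args
        intro α β γ
        try dsimp only
        have h1 := hd (p0 α) β γ
        try simp only [S1, S4, S5, hA12, S7, hA13, S9, S10, S11, P1r1, P1r2, P1r0p, Rsg1, Rsg2, dm_add, dm_neg, dm_sub, p0_add, p0_neg, p0_sub, p1_add, p1_neg, p1_sub, Ld_add, Ld_neg, Ld_sub, l2_add1, l2_neg1, l2_sub1, l2_add2, l2_neg2, l2_sub2, l2m_add1, l2m_neg1, l2m_sub1, l2m_add2, l2m_neg2, l2m_sub2, sg_add1, sg_neg1, sg_sub1, sg_add2, sg_neg2, sg_sub2, r0_add1, r0_neg1, r0_sub1, r0_add2, r0_neg2, r0_sub2, q0_add1, q0_neg1, q0_sub1, q0_add2, q0_neg2, q0_sub2, r1_add1, r1_neg1, r1_sub1, r1_add2, r1_neg2, r1_sub2, r2_add1, r2_neg1, r2_sub1, r2_add2, r2_neg2, r2_sub2, r2_add3, r2_neg3, r2_sub3] at h1 ⊢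
        first
        | linear_combination (norm := abel1) h1.symm
        | linear_combination (norm := abel1) (h1.symm).symm
      · -- l2m with d antisym
        intro ξ η
        show A.r0' (p0 (dm ξ)) η = -A.r0' (p0 (dm η)) ξ
        rw [hpchain ξ, hA13]
        exact S4 ξ (dm η)
      · -- d of l3 (Jacobi up to homotopy, degree 0)
        intro α β γ
        try dsimp only
        try simp only [S1, S4, S5, hA12, S7, hA13, S9, S10, S11, P1r1, P1r2, P1r0p, Rsg1, Rsg2, dm_add, dm_neg, dm_sub, p0_add, p0_neg, p0_sub, p1_add, p1_neg, p1_sub, Ld_add, Ld_neg, Ld_sub, l2_add1, l2_neg1, l2_sub1, l2_add2, l2_neg2, l2_sub2, l2m_add1, l2m_neg1, l2m_sub1, l2m_add2, l2m_neg2, l2m_sub2, sg_add1, sg_neg1, sg_sub1, sg_add2, sg_neg2, sg_sub2, r0_add1, r0_neg1, r0_sub1, r0_add2, r0_neg2, r0_sub2, q0_add1, q0_neg1, q0_sub1, q0_add2, q0_neg2, q0_sub2, r1_add1, r1_neg1, r1_sub1, r1_add2, r1_neg2, r1_sub2, r2_add1, r2_neg1, r2_sub1, r2_add2, r2_neg2,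 r2_sub2, r2_add3, r2_neg3, r2_sub3]
        abel
      · -- l3 on d
        intro α β ξ
        try dsimp only
        try simp only [S1, S4, S5, hA12, S7, hA13, S9, S10, S11, P1r1, P1r2, P1r0p, Rsg1, Rsg2, dm_add, dm_neg, dm_sub, p0_add, p0_neg, p0_sub, p1_add, p1_neg, p1_sub, Ld_add, Ld_neg, Ld_sub, l2_add1, l2_neg1, l2_sub1, l2_add2, l2_neg2, l2_sub2, l2m_add1, l2m_neg1, l2m_sub1, l2m_add2, l2m_neg2, l2m_sub2, sg_add1, sg_neg1, sg_sub1, sg_add2, sg_neg2, sg_sub2, r0_add1, r0_neg1, r0_sub1, r0_add2, r0_neg2, r0_sub2, q0_add1, q0_neg1, q0_sub1, q0_add2, q0_neg2, q0_sub2, r1_add1, r1_neg1, r1_sub1, r1_add2, r1_neg2, r1_sub2, r2_add1, r2_neg1, r2_sub1, r2_add2, r2_neg2, r2_sub2, r2_add3, r2_neg3, r2_sub3]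
        abel
      · -- the big l3 coherence
        intro α β γ δ
        try dsimp only
        have w1 := congrArg (A.r0' (p0 α)) (hd (p0 β) δ γ)
        have w2 := congrArg (A.r0' (p0 α)) (hd (p0 γ) β δ)
        have w3 := congrArg (A.r0' (p0 β)) (hd (p0 α) δ γ)
        have w4 := congrArg (A.r0' (p0 β)) (hd (p0 γ) α δ)
        have w5 := congrArg (A.r0' (p0 γ)) (hd (p0 α) β δ)
        have w6 := congrArg (A.r0' (p0 γ)) (hd (p0 β) α δ)
        have w7 := congrArg (A.r0' (p0 δ)) (hd (p0 α) β γ)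
        have w8 := congrArg (A.r0' (p0 δ)) (hd (p0 β) α γ)
        have c1 := hd (p0 α) (A.r0 (p0 β) γ) δ
        have c2 := hd (p0 α) (A.r0 (p0 β) δ) γ
        have c3 := hd (p0 β) (A.r0 (p0 α) γ) δ
        have c4 := hd (p0 β) (A.r0 (p0 α) δ) γ
        have c5 := hd (p0 γ) (A.r0 (p0 α) β) δ
        have c6 := hd (p0 γ) (A.r0 (p0 α) δ) β
        have c7 := hd (p0 δ) (A.r0 (p0 α) β) γ
        have c8 := hd (p0 δ) (A.r0 (p0 α) γ) β
        have e1 := congrArg (fun t => A.r1 t δ) (he α (A.r0 (p0 β) γ))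
        try simp only [S1, S4, S5, hA12, S7, hA13, S9, S10, S11, P1r1, P1r2, P1r0p, Rsg1, Rsg2, dm_add, dm_neg, dm_sub, p0_add, p0_neg, p0_sub, p1_add, p1_neg, p1_sub, Ld_add, Ld_neg, Ld_sub, l2_add1, l2_neg1, l2_sub1, l2_add2, l2_neg2, l2_sub2, l2m_add1, l2m_neg1, l2m_sub1, l2m_add2, l2m_neg2, l2m_sub2, sg_add1, sg_neg1, sg_sub1, sg_add2, sg_neg2, sg_sub2, r0_add1, r0_neg1, r0_sub1, r0_add2, r0_neg2, r0_sub2, q0_add1, q0_neg1, q0_sub1, q0_add2, q0_neg2, q0_sub2, r1_add1, r1_neg1, r1_sub1, r1_add2, r1_neg2, r1_sub2, r2_add1, r2_neg1, r2_sub1, r2_add2, r2_neg2, r2_sub2, r2_add3, r2_neg3, r2_sub3] at w1 w2 w3 w4 w5 w6 w7 w8 c1 c2 c3 c4 c5 c6 c7 c8 e1 ⊢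
        simp only [hb β α, hb δ α, hb δ β, hb γ α, hb γ β, hb γ δ, he β α, he δ α,
          he δ β, he γ α, he γ β, he γ δ, hL9 (p0 β) (p0 α), hL9 (p0 δ) (p0 α),
          hL9 (p0 δ) (p0 β), hL9 (p0 γ) (p0 α), hL9 (p0 γ) (p0 β), hL9 (p0 γ) (p0 δ),
          hA10 (p0 α) (L.l2 (p0 β) (p0 δ)), hA10 (p0 α) (L.l2 (p0 β) (p0 γ)),
          hA10 (p0 α) (L.l2 (p0 δ) (p0 γ)), hA10 (p0 β) (L.l2 (p0 α) (p0 δ)),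
          hA10 (p0 β) (L.l2 (p0 α) (p0 γ)), hA10 (p0 β) (L.l2 (p0 δ) (p0 γ)),
          hA10 (p0 β) (p0 α), hA10 (p0 δ) (L.l2 (p0 α) (p0 β)),
          hA10 (p0 δ) (L.l2 (p0 α) (p0 γ)), hA10 (p0 δ) (L.l2 (p0 β) (p0 γ)),
          hA10 (p0 δ) (p0 α), hA10 (p0 δ) (p0 β), hA10 (p0 γ) (L.l2 (p0 α) (p0 β)),
          hA10 (p0 γ) (L.l2 (p0 α) (p0 δ)), hA10 (p0 γ) (L.l2 (p0 β) (p0 δ)),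
          hA10 (p0 γ) (p0 α), hA10 (p0 γ) (p0 β), hA10 (p0 γ) (p0 δ),
          dm_add, dm_neg, dm_sub, p0_add, p0_neg, p0_sub, p1_add, p1_neg, p1_sub, Ld_add, Ld_neg, Ld_sub, l2_add1, l2_neg1, l2_sub1, l2_add2, l2_neg2, l2_sub2, l2m_add1, l2m_neg1, l2m_sub1, l2m_add2, l2m_neg2, l2m_sub2, sg_add1, sg_neg1, sg_sub1, sg_add2, sg_neg2, sg_sub2, r0_add1, r0_neg1, r0_sub1, r0_add2, r0_neg2, r0_sub2, q0_add1, q0_neg1, q0_sub1, q0_add2, q0_neg2, q0_sub2, r1_add1, r1_neg1, r1_sub1, r1_add2, r1_neg2, r1_sub2, r2_add1, r2_neg1, r2_sub1, r2_add2, r2_neg2, r2_sub2, r2_add3, r2_neg3, r2_sub3] at w1 w2 w3 w4 w5 w6 w7 w8 c1 c2 c3 c4 c5 c6 c7 c8 e1 ⊢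
        linear_combination (norm := abel1) w2 + w3 + w3 + w6 + w7 + w7 + w8 + w8 + w8
          + w8 + c3 + c3 + c3 + c4 + c8 + e1 + e1 + e1 + e1 + e1 - w1 - w1 - w4 - w5
          - w5 - c1 - c1 - c1 - c2 - c5 - c5 - c5 - c6 - c7 - c7
    · -- action by derivations
      refine ⟨hA, ?_, ?_, ?_, ?_, ?_, ?_, ?_⟩
      · intro x
        refine ⟨hA11 x, ?_, ?_, ?_⟩
        · intro α β
          try dsimp only
          try simp only [S1, S4, S5, hA12, S7, hA13, S9, S10, S11, P1r1, P1r2, P1r0p, Rsg1, Rsg2, dm_add, dm_neg, dm_sub, p0_add, p0_neg, p0_sub, p1_add, p1_neg, p1_sub, Ld_add, Ld_neg, Ld_sub, l2_add1, l2_neg1, l2_sub1, l2_add2, l2_neg2, l2_sub2, l2m_add1, l2m_neg1, l2m_sub1, l2m_add2, l2m_neg2, l2m_sub2, sg_add1, sg_neg1, sg_sub1, sg_add2, sg_neg2, sg_sub2, r0_add1, r0_neg1, r0_sub1, r0_add2, r0_neg2, r0_sub2, q0_add1, q0_neg1, q0_sub1, q0_add2, q0_neg2, q0_sub2, r1_add1,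 r1_neg1, r1_sub1, r1_add2, r1_neg2, r1_sub2, r2_add1, r2_neg1, r2_sub1, r2_add2, r2_neg2, r2_sub2, r2_add3, r2_neg3, r2_sub3]
          abel
        · intro α ξ
          try dsimp only
          try simp only [S1, S4, S5, hA12, S7, hA13, S9, S10, S11, P1r1, P1r2, P1r0p, Rsg1, Rsg2, dm_add, dm_neg, dm_sub, p0_add, p0_neg, p0_sub, p1_add, p1_neg, p1_sub, Ld_add, Ld_neg, Ld_sub, l2_add1, l2_neg1, l2_sub1, l2_add2, l2_neg2, l2_sub2, l2m_add1, l2m_neg1, l2m_sub1, l2m_add2, l2m_neg2, l2m_sub2, sg_add1, sg_neg1, sg_sub1, sg_add2, sg_neg2, sg_sub2, r0_add1, r0_neg1, r0_sub1, r0_add2, r0_neg2, r0_sub2, q0_add1, q0_neg1, q0_sub1, q0_add2, q0_neg2, q0_sub2, r1_add1, r1_neg1, r1_sub1, r1_add2, r1_neg2, r1_sub2, r2_add1, r2_neg1, r2_sub1, r2_add2, r2_neg2, r2_sub2, r2_add3, r2_neg3, r2_sub3]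
          abel
        · intro α β γ
          try dsimp only
          have hw := congrArg (A.r0' (p0 β)) (hd x α γ)
          have hcc := hd x (A.r0 (p0 α) β) γ
          try simp only [S1, S4, S5, hA12, S7, hA13, S9, S10, S11, P1r1, P1r2, P1r0p, Rsg1, Rsg2, dm_add, dm_neg, dm_sub, p0_add, p0_neg, p0_sub, p1_add, p1_neg, p1_sub, Ld_add, Ld_neg, Ld_sub, l2_add1, l2_neg1, l2_sub1, l2_add2, l2_neg2, l2_sub2, l2m_add1, l2m_neg1, l2m_sub1, l2m_add2, l2m_neg2, l2m_sub2, sg_add1, sg_neg1, sg_sub1, sg_add2, sg_neg2, sg_sub2, r0_add1, r0_neg1, r0_sub1, r0_add2, r0_neg2, r0_sub2, q0_add1, q0_neg1, q0_sub1, q0_add2, q0_neg2, q0_sub2, r1_add1, r1_neg1, r1_sub1, r1_add2, r1_neg2, r1_sub2, r2_add1, r2_neg1, r2_sub1, r2_add2, r2_neg2, r2_sub2, r2_add3, r2_neg3, r2_sub3] at hw hcc ⊢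
          simp only [hb γ α, hL9 x (p0 β), hA10 (p0 α) (L.l2 (p0 β) x),
            hA10 x (L.l2 (p0 α) (p0 β)), hA10 x (p0 α), hA10 x (p0 β), hA10 x (p0 γ),
            dm_add, dm_neg, dm_sub, p0_add, p0_neg, p0_sub, p1_add, p1_neg, p1_sub, Ld_add, Ld_neg, Ld_sub, l2_add1, l2_neg1, l2_sub1, l2_add2, l2_neg2, l2_sub2, l2m_add1, l2m_neg1, l2m_sub1, l2m_add2, l2m_neg2, l2m_sub2, sg_add1, sg_neg1, sg_sub1, sg_add2, sg_neg2, sg_sub2, r0_add1, r0_neg1, r0_sub1, r0_add2, r0_neg2, r0_sub2, q0_add1, q0_neg1, q0_sub1, q0_add2, q0_neg2, q0_sub2, r1_add1, r1_neg1, r1_sub1, r1_add2, r1_neg2, r1_sub2, r2_add1, r2_neg1, r2_sub1, r2_add2, r2_neg2, r2_sub2, r2_add3, r2_neg3, r2_sub3] at hw hcc ⊢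
          linear_combination (norm := abel1) hw + hcc
      · refine fun x α => ⟨fun u v => ?_, fun c u => ?_⟩
        · show -A.r2 x (p0 α) (u + v) - A.r1 (σ x α) (u + v) = _
          rw [r2_add3, r1_add2]; dsimp only; abel
        · show -A.r2 x (p0 α) (c • u) - A.r1 (σ x α) (c • u) = _
          rw [(hA7 x (p0 α)).map_smul, (hA5 (σ x α)).map_smul]; dsimp only; module
      · refine fun x γ => ⟨fun u v => ?_, fun c u => ?_⟩
        · show -A.r2 x (p0 (u + v)) γ - A.r1 (σ x (u + v)) γ = _
          rw [p0_add, r2_add2, sg_add2, r1_add1]; dsimp only; abel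
        · show -A.r2 x (p0 (c • u)) γ - A.r1 (σ x (c • u)) γ = _
          rw [hp0.map_smul, (hA8 x γ).map_smul, (hσ0 x).map_smul, (hA6 γ).map_smul]
          dsimp only; module
      · refine fun β γ => ⟨fun u v => ?_, fun c u => ?_⟩
        · show -A.r2 (u + v) (p0 β) γ - A.r1 (σ (u + v) β) γ = _
          rw [r2_add1, sg_add1, r1_add1]; dsimp only; abel
        · show -A.r2 (c • u) (p0 β) γ - A.r1 (σ (c • u) β) γ = _
          rw [(hA9 (p0 β) γ).map_smul, (hσ0' β).map_smul, (hA6 γ).map_smul]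
          dsimp only; module
      · intro x α β
        try dsimp only
        first
        | linear_combination (norm := abel1) (hd x α β).symm
        | linear_combination (norm := abel1) ((hd x α β).symm).symm
      · intro a α β
        try dsimp only
        try simp only [S1, S4, S5, hA12, S7, hA13, S9, S10, S11, P1r1, P1r2, P1r0p, Rsg1, Rsg2, dm_add, dm_neg, dm_sub, p0_add, p0_neg, p0_sub, p1_add, p1_neg, p1_sub, Ld_add, Ld_neg, Ld_sub, l2_add1, l2_neg1, l2_sub1, l2_add2, l2_neg2, l2_sub2, l2m_add1, l2m_neg1, l2m_sub1, l2m_add2, l2m_neg2, l2m_sub2, sg_add1, sg_neg1, sg_sub1, sg_add2, sg_neg2, sg_sub2, r0_add1, r0_neg1, r0_sub1, r0_add2, r0_neg2, r0_sub2, q0_add1, q0_neg1, q0_sub1, q0_add2, q0_neg2, q0_sub2, r1_add1, r1_neg1, r1_sub1, r1_add2, r1_neg2, r1_sub2, r2_add1, r2_neg1, r2_sub1, r2_add2, r2_neg2, r2_sub2, r2_add3, r2_neg3, r2_sub3]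
        abel
      · intro x y α β
        try dsimp only
        try simp only [S1, S4, S5, hA12, S7, hA13, S9, S10, S11, P1r1, P1r2, P1r0p, Rsg1, Rsg2, dm_add, dm_neg, dm_sub, p0_add, p0_neg, p0_sub, p1_add, p1_neg, p1_sub, Ld_add, Ld_neg, Ld_sub, l2_add1, l2_neg1, l2_sub1, l2_add2, l2_neg2, l2_sub2, l2m_add1, l2m_neg1, l2m_sub1, l2m_add2, l2m_neg2, l2m_sub2, sg_add1, sg_neg1, sg_sub1, sg_add2, sg_neg2, sg_sub2, r0_add1, r0_neg1, r0_sub1, r0_add2, r0_neg2, r0_sub2, q0_add1, q0_neg1, q0_sub1, q0_add2, q0_neg2, q0_sub2, r1_add1, r1_neg1, r1_sub1, r1_add2, r1_neg2, r1_sub2, r2_add1, r2_neg1, r2_sub1, r2_add2, r2_neg2, r2_sub2, r2_add3, r2_neg3, r2_sub3]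
        simp only [hL9 x (p0 α), hL9 y (p0 α), hA10 x (L.l2 (p0 α) y),
          hA10 x (p0 α), hA10 y (L.l2 (p0 α) x), dm_add, dm_neg, dm_sub, p0_add, p0_neg, p0_sub, p1_add, p1_neg, p1_sub, Ld_add, Ld_neg, Ld_sub, l2_add1, l2_neg1, l2_sub1, l2_add2, l2_neg2, l2_sub2, l2m_add1, l2m_neg1, l2m_sub1, l2m_add2, l2m_neg2, l2m_sub2, sg_add1, sg_neg1, sg_sub1, sg_add2, sg_neg2, sg_sub2, r0_add1, r0_neg1, r0_sub1, r0_add2, r0_neg2, r0_sub2, q0_add1, q0_neg1, q0_sub1, q0_add2, q0_neg2, q0_sub2, r1_add1, r1_neg1, r1_sub1, r1_add2, r1_neg2, r1_sub2, r2_add1, r2_neg1, r2_sub1, r2_add2, r2_neg2, r2_sub2, r2_add3, r2_neg3, r2_sub3]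
        abel
    · -- Π restricted to m is a homomorphism
      refine ⟨hp0, hp1, fun x => hσ0 (p0 x), ?_, he, fun a => (hpchain a).symm,
        ?_, ?_, ?_⟩
      · refine fun y => ⟨fun u v => ?_, fun c u => ?_⟩
        · show σ (p0 (u + v)) y = σ (p0 u) y + σ (p0 v) y
          rw [p0_add, sg_add1]
        · show σ (p0 (c • u)) y = c • σ (p0 u) y
          rw [hp0.map_smul]; exact (hσ0' y).map_smul c (p0 u)
      · intro x y
        try dsimp only
        first
        | linear_combination (norm := abel1) P1 (p0 x) y
        | linear_combination (norm := abel1) (P1 (p0 x) y).symm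
      · intro x a
        try dsimp only
        first
        | linear_combination (norm := abel1) P3 (p0 x) a
        | linear_combination (norm := abel1) (P3 (p0 x) a).symm
      · intro α β γ
        try dsimp only
        have e1 := he α (A.r0 (p0 β) γ)
        have e2 := he β (A.r0 (p0 α) γ)
        try simp only [S1, S4, S5, hA12, S7, hA13, S9, S10, S11, P1r1, P1r2, P1r0p, Rsg1, Rsg2, dm_add, dm_neg, dm_sub, p0_add, p0_neg, p0_sub, p1_add, p1_neg, p1_sub, Ld_add, Ld_neg, Ld_sub, l2_add1, l2_neg1, l2_sub1, l2_add2, l2_neg2, l2_sub2, l2m_add1, l2m_neg1, l2m_sub1, l2m_add2, l2m_neg2, l2m_sub2, sg_add1, sg_neg1, sg_sub1, sg_add2, sg_neg2, sg_sub2, r0_add1, r0_neg1, r0_sub1, r0_add2, r0_neg2, r0_sub2, q0_add1, q0_neg1, q0_sub1, q0_add2, q0_neg2, q0_sub2, r1_add1, r1_neg1, r1_sub1, r1_add2, r1_neg2, r1_sub2, r2_add1, r2_neg1, r2_sub1, r2_add2, r2_neg2, r2_sub2, r2_add3, r2_neg3, r2_sub3] at e1 e2 ⊢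
        simp only [hb γ β, he γ α, he γ β, hL9 (p0 γ) (p0 α), hL9 (p0 γ) (p0 β),
          dm_add, dm_neg, dm_sub, p0_add, p0_neg, p0_sub, p1_add, p1_neg, p1_sub, Ld_add, Ld_neg, Ld_sub, l2_add1, l2_neg1, l2_sub1, l2_add2, l2_neg2, l2_sub2, l2m_add1, l2m_neg1, l2m_sub1, l2m_add2, l2m_neg2, l2m_sub2, sg_add1, sg_neg1, sg_sub1, sg_add2, sg_neg2, sg_sub2, r0_add1, r0_neg1, r0_sub1, r0_add2, r0_neg2, r0_sub2, q0_add1, q0_neg1, q0_sub1, q0_add2, q0_neg2, q0_sub2, r1_add1, r1_neg1, r1_sub1, r1_add2, r1_neg2, r1_sub2, r2_add1, r2_neg1, r2_sub1, r2_add2, r2_neg2, r2_sub2, r2_add3, r2_neg3, r2_sub3] at e1 e2 ⊢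
        linear_combination (norm := abel1) e2 - e1
    · intro x α
      first
      | linear_combination (norm := abel1) P1 x α
      | linear_combination (norm := abel1) (P1 x α).symm
    · intro a α
      exact (P2 a α).symm
    · intro x ξ
      try dsimp only
      first
    | linear_combination (norm := abel1) P3 x ξ
    | linear_combination (norm := abel1) (P3 x ξ).symm
    · intro x y α
      linear_combination (norm := abel1) (P4 x y α).symm
    · intro α β; rfl
    · intro α ξ; rfl
    · intro ξ α
      exact S4 ξ α
    · intro α β γ; rfl
    · intro x β γ; rfl
    · intro α β; rfl
    · intro α β
      exact he α β
  · rintro ⟨d', l2', l2m', l3'⟩ hdeq h2 h2m h3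
    simp only [LieTwoStr.mk.injEq]
    exact ⟨hdeq, funext fun α => funext fun β => h2 α β,
      funext fun α => funext fun ξ => h2m α ξ,
      funext fun α => funext fun β => funext fun γ => h3 α β γ⟩
end

section
/- Let φ be an action of a Lie 2-algebra (g, d, l₂, l₃) on a Lie 2-algebra (m, d̃, l̃₂, l̃₃) by derivations. Then g ⊕ m with differential L₁ = d + d̃, bracket [x+α, y+β] = l₂(x,y) + l̃₂(α,β) + x▷β − y▷α, and Jacobiator L₃(x+α, y+β, z+γ) = l₃(x,y,z) + l̃₃(α,β,γ) − (x,y)▷γ − (y,z)▷α − (z,x)▷β + l_{φ₀(x)}(β,γ) + l_{φ₀(y)}(γ,α) + l_{φ₀(z)}(α,β) is a Lie 2-algebra (the crossed product g ▷_φ m), containing g as a Lie 2-subalgebra and m as an ideal. -/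
universe u

variable (K : Type u) [Field K]
variable {g0 g1 h0 h1 m0 m1 : Type u}
  [AddCommGroup g0] [Module K g0] [AddCommGroup g1] [Module K g1]
  [AddCommGroup h0] [Module K h0] [AddCommGroup h1] [Module K h1]
  [AddCommGroup m0] [Module K m0] [AddCommGroup m1] [Module K m1]

variable {K}

variable (K)

set_option maxHeartbeats 4000000 in
set_option pp.deepTerms true in
set_option pp.maxSteps 100000 in
/-- If `φ` is an action of the Lie 2-algebra `g` on the Lie 2-algebra `m`
by derivations, then the crossed product `g ▷_φ m` on `g ⊕ m` is a Lie 2-algebra,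
containing `g` as a Lie 2-subalgebra and `m` as an ideal. -/
theorem crossedProduct_is_lie2 (L : LieTwoStr g0 g1) (M : LieTwoStr m0 m1)
    (A : TwoAction g0 g1 m0 m1) (lφ : g0 → m0 → m0 → m1)
    (hL : IsLieTwoAlgebra K L) (hM : IsLieTwoAlgebra K M)
    (hA : IsActionByDerivations K L M A lφ) :
    IsLieTwoAlgebra K (crossedProduct L M A lφ) ∧
    -- g is a Lie 2-subalgebra
    (∀ x y : g0, ((crossedProduct L M A lφ).l2 (x, 0) (y, 0)).2 = 0) ∧
    (∀ (x : g0) (a : g1), ((crossedProduct L M A lφ).l2m (x, 0) (a, 0)).2 = 0) ∧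
    (∀ a : g1, ((crossedProduct L M A lφ).d (a, 0)).2 = 0) ∧
    (∀ x y z : g0, ((crossedProduct L M A lφ).l3 (x, 0) (y, 0) (z, 0)).2 = 0) ∧
    -- m is an ideal
    (∀ ξ : m1, ((crossedProduct L M A lφ).d ((0 : g1), ξ)).1 = 0) ∧
    (∀ (α : m0) (q : g0 × m0), ((crossedProduct L M A lφ).l2 ((0 : g0), α) q).1 = 0) ∧
    (∀ (α : m0) (b : g1 × m1), ((crossedProduct L M A lφ).l2m ((0 : g0), α) b).1 = 0) ∧
    (∀ (p : g0 × m0) (ξ : m1), ((crossedProduct L M A lφ).l2m p ((0 : g1), ξ)).1 = 0) ∧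
    (∀ (α : m0) (q r : g0 × m0),
      ((crossedProduct L M A lφ).l3 ((0 : g0), α) q r).1 = 0) := by
  obtain ⟨Ld, Ll2r, Ll2l, Ll2mr, Ll2ml, Ll3c, Ll3b, Ll3a, Lsk2, Lsk3ab, Lsk3bc,
    Ldl2m, Lsk2m, Ljac, Ljacm, Lbig⟩ := hL
  obtain ⟨Md, Ml2r, Ml2l, Ml2mr, Ml2ml, Ml3c, Ml3b, Ml3a, Msk2, Msk3ab, Msk3bc,
    Mdl2m, Msk2m, Mjac, Mjacm, Mbig⟩ := hM
  obtain ⟨⟨r0l, r0lx, rpl, rplx, r1l, r1la, r2l, r2ly, r2lx, r2sk, dr0p, r0d, rpd,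
    jr0, jrp, jr1, jr2⟩, hDer, lplin3, lplin2, lplin1, lpsk, lpd, lpl2⟩ := hA
  have D2 : ∀ x α β, M.d (lφ x α β)
      = A.r0 x (M.l2 α β) - M.l2 (A.r0 x α) β - M.l2 α (A.r0 x β) :=
    fun x => (hDer x).2.1
  have D3 : ∀ x α ξ, lφ x α (M.d ξ)
      = A.r0' x (M.l2m α ξ) - M.l2m (A.r0 x α) ξ - M.l2m α (A.r0' x ξ) :=
    fun x => (hDer x).2.2.1
  have D4 : ∀ x α β γ, A.r0' x (M.l3 α β γ) =
      lφ x α (M.l2 β γ) + M.l2m α (lφ x β γ) + M.l3 (A.r0 x α) β γ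
        + lφ x β (M.l2 γ α) + M.l2m β (lφ x γ α) + M.l3 α (A.r0 x β) γ
        + lφ x γ (M.l2 α β) + M.l2m γ (lφ x α β) + M.l3 α β (A.r0 x γ) :=
    fun x => (hDer x).2.2.2
  have mda1 : ∀ u v, M.d (u + v) = M.d u + M.d v := fun u v => (Md).map_add u v
  have mds1 : ∀ u v, M.d (u - v) = M.d u - M.d v := fun u v => (Md).map_sub u v
  have mdn1 : ∀ u, M.d (-u) = -(M.d u) := fun u => (Md).map_neg u
  have mdm1 : ∀ (c : K) u, M.d (c • u) = c • M.d u := fun c u => (Md).map_smul c u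
  have mdz1 : M.d 0 = 0 := (Md).map_zero
  have lda1 : ∀ u v, L.d (u + v) = L.d u + L.d v := fun u v => (Ld).map_add u v
  have lds1 : ∀ u v, L.d (u - v) = L.d u - L.d v := fun u v => (Ld).map_sub u v
  have ldn1 : ∀ u, L.d (-u) = -(L.d u) := fun u => (Ld).map_neg u
  have ldm1 : ∀ (c : K) u, L.d (c • u) = c • L.d u := fun c u => (Ld).map_smul c u
  have ldz1 : L.d 0 = 0 := (Ld).map_zero
  have m2a1 : ∀ x2 u v, M.l2 (u + v) x2 = M.l2 u x2 + M.l2 v x2 := fun x2 u v => (Ml2l x2).map_add u v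
  have m2s1 : ∀ x2 u v, M.l2 (u - v) x2 = M.l2 u x2 - M.l2 v x2 := fun x2 u v => (Ml2l x2).map_sub u v
  have m2n1 : ∀ x2 u, M.l2 (-u) x2 = -(M.l2 u x2) := fun x2 u => (Ml2l x2).map_neg u
  have m2m1 : ∀ x2 (c : K) u, M.l2 (c • u) x2 = c • M.l2 u x2 := fun x2 c u => (Ml2l x2).map_smul c u
  have m2z1 : ∀ x2, M.l2 0 x2 = 0 := fun x2  => (Ml2l x2).map_zero
  have m2a2 : ∀ x1 u v, M.l2 x1 (u + v) = M.l2 x1 u + M.l2 x1 v := fun x1 u v => (Ml2r x1).map_add u v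
  have m2s2 : ∀ x1 u v, M.l2 x1 (u - v) = M.l2 x1 u - M.l2 x1 v := fun x1 u v => (Ml2r x1).map_sub u v
  have m2n2 : ∀ x1 u, M.l2 x1 (-u) = -(M.l2 x1 u) := fun x1 u => (Ml2r x1).map_neg u
  have m2m2 : ∀ x1 (c : K) u, M.l2 x1 (c • u) = c • M.l2 x1 u := fun x1 c u => (Ml2r x1).map_smul c u
  have m2z2 : ∀ x1, M.l2 x1 0 = 0 := fun x1  => (Ml2r x1).map_zero
  have mma1 : ∀ x2 u v, M.l2m (u + v) x2 = M.l2m u x2 + M.l2m v x2 := fun x2 u v => (Ml2ml x2).map_add u v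
  have mms1 : ∀ x2 u v, M.l2m (u - v) x2 = M.l2m u x2 - M.l2m v x2 := fun x2 u v => (Ml2ml x2).map_sub u v
  have mmn1 : ∀ x2 u, M.l2m (-u) x2 = -(M.l2m u x2) := fun x2 u => (Ml2ml x2).map_neg u
  have mmm1 : ∀ x2 (c : K) u, M.l2m (c • u) x2 = c • M.l2m u x2 := fun x2 c u => (Ml2ml x2).map_smul c u
  have mmz1 : ∀ x2, M.l2m 0 x2 = 0 := fun x2  => (Ml2ml x2).map_zero
  have mma2 : ∀ x1 u v, M.l2m x1 (u + v) = M.l2m x1 u + M.l2m x1 v := fun x1 u v => (Ml2mr x1).map_add u v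
  have mms2 : ∀ x1 u v, M.l2m x1 (u - v) = M.l2m x1 u - M.l2m x1 v := fun x1 u v => (Ml2mr x1).map_sub u v
  have mmn2 : ∀ x1 u, M.l2m x1 (-u) = -(M.l2m x1 u) := fun x1 u => (Ml2mr x1).map_neg u
  have mmm2 : ∀ x1 (c : K) u, M.l2m x1 (c • u) = c • M.l2m x1 u := fun x1 c u => (Ml2mr x1).map_smul c u
  have mmz2 : ∀ x1, M.l2m x1 0 = 0 := fun x1  => (Ml2mr x1).map_zero
  have l2a1 : ∀ x2 u v, L.l2 (u + v) x2 = L.l2 u x2 + L.l2 v x2 := fun x2 u v => (Ll2l x2).map_add u v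
  have l2s1 : ∀ x2 u v, L.l2 (u - v) x2 = L.l2 u x2 - L.l2 v x2 := fun x2 u v => (Ll2l x2).map_sub u v
  have l2n1 : ∀ x2 u, L.l2 (-u) x2 = -(L.l2 u x2) := fun x2 u => (Ll2l x2).map_neg u
  have l2m1 : ∀ x2 (c : K) u, L.l2 (c • u) x2 = c • L.l2 u x2 := fun x2 c u => (Ll2l x2).map_smul c u
  have l2z1 : ∀ x2, L.l2 0 x2 = 0 := fun x2  => (Ll2l x2).map_zero
  have l2a2 : ∀ x1 u v, L.l2 x1 (u + v) = L.l2 x1 u + L.l2 x1 v := fun x1 u v => (Ll2r x1).map_add u v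
  have l2s2 : ∀ x1 u v, L.l2 x1 (u - v) = L.l2 x1 u - L.l2 x1 v := fun x1 u v => (Ll2r x1).map_sub u v
  have l2n2 : ∀ x1 u, L.l2 x1 (-u) = -(L.l2 x1 u) := fun x1 u => (Ll2r x1).map_neg u
  have l2m2 : ∀ x1 (c : K) u, L.l2 x1 (c • u) = c • L.l2 x1 u := fun x1 c u => (Ll2r x1).map_smul c u
  have l2z2 : ∀ x1, L.l2 x1 0 = 0 := fun x1  => (Ll2r x1).map_zero
  have lma1 : ∀ x2 u v, L.l2m (u + v) x2 = L.l2m u x2 + L.l2m v x2 := fun x2 u v => (Ll2ml x2).map_add u v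
  have lms1 : ∀ x2 u v, L.l2m (u - v) x2 = L.l2m u x2 - L.l2m v x2 := fun x2 u v => (Ll2ml x2).map_sub u v
  have lmn1 : ∀ x2 u, L.l2m (-u) x2 = -(L.l2m u x2) := fun x2 u => (Ll2ml x2).map_neg u
  have lmm1 : ∀ x2 (c : K) u, L.l2m (c • u) x2 = c • L.l2m u x2 := fun x2 c u => (Ll2ml x2).map_smul c u
  have lmz1 : ∀ x2, L.l2m 0 x2 = 0 := fun x2  => (Ll2ml x2).map_zero
  have lma2 : ∀ x1 u v, L.l2m x1 (u + v) = L.l2m x1 u + L.l2m x1 v := fun x1 u v => (Ll2mr x1).map_add u v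
  have lms2 : ∀ x1 u v, L.l2m x1 (u - v) = L.l2m x1 u - L.l2m x1 v := fun x1 u v => (Ll2mr x1).map_sub u v
  have lmn2 : ∀ x1 u, L.l2m x1 (-u) = -(L.l2m x1 u) := fun x1 u => (Ll2mr x1).map_neg u
  have lmm2 : ∀ x1 (c : K) u, L.l2m x1 (c • u) = c • L.l2m x1 u := fun x1 c u => (Ll2mr x1).map_smul c u
  have lmz2 : ∀ x1, L.l2m x1 0 = 0 := fun x1  => (Ll2mr x1).map_zero
  have r0a1 : ∀ x2 u v, A.r0 (u + v) x2 = A.r0 u x2 + A.r0 v x2 := fun x2 u v => (r0lx x2).map_add u v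
  have r0s1 : ∀ x2 u v, A.r0 (u - v) x2 = A.r0 u x2 - A.r0 v x2 := fun x2 u v => (r0lx x2).map_sub u v
  have r0n1 : ∀ x2 u, A.r0 (-u) x2 = -(A.r0 u x2) := fun x2 u => (r0lx x2).map_neg u
  have r0m1 : ∀ x2 (c : K) u, A.r0 (c • u) x2 = c • A.r0 u x2 := fun x2 c u => (r0lx x2).map_smul c u
  have r0z1 : ∀ x2, A.r0 0 x2 = 0 := fun x2  => (r0lx x2).map_zero
  have r0a2 : ∀ x1 u v, A.r0 x1 (u + v) = A.r0 x1 u + A.r0 x1 v := fun x1 u v => (r0l x1).map_add u v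
  have r0s2 : ∀ x1 u v, A.r0 x1 (u - v) = A.r0 x1 u - A.r0 x1 v := fun x1 u v => (r0l x1).map_sub u v
  have r0n2 : ∀ x1 u, A.r0 x1 (-u) = -(A.r0 x1 u) := fun x1 u => (r0l x1).map_neg u
  have r0m2 : ∀ x1 (c : K) u, A.r0 x1 (c • u) = c • A.r0 x1 u := fun x1 c u => (r0l x1).map_smul c u
  have r0z2 : ∀ x1, A.r0 x1 0 = 0 := fun x1  => (r0l x1).map_zero
  have rpa1 : ∀ x2 u v, A.r0' (u + v) x2 = A.r0' u x2 + A.r0' v x2 := fun x2 u v => (rplx x2).map_add u v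
  have rps1 : ∀ x2 u v, A.r0' (u - v) x2 = A.r0' u x2 - A.r0' v x2 := fun x2 u v => (rplx x2).map_sub u v
  have rpn1 : ∀ x2 u, A.r0' (-u) x2 = -(A.r0' u x2) := fun x2 u => (rplx x2).map_neg u
  have rpm1 : ∀ x2 (c : K) u, A.r0' (c • u) x2 = c • A.r0' u x2 := fun x2 c u => (rplx x2).map_smul c u
  have rpz1 : ∀ x2, A.r0' 0 x2 = 0 := fun x2  => (rplx x2).map_zero
  have rpa2 : ∀ x1 u v, A.r0' x1 (u + v) = A.r0' x1 u + A.r0' x1 v := fun x1 u v => (rpl x1).map_add u v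
  have rps2 : ∀ x1 u v, A.r0' x1 (u - v) = A.r0' x1 u - A.r0' x1 v := fun x1 u v => (rpl x1).map_sub u v
  have rpn2 : ∀ x1 u, A.r0' x1 (-u) = -(A.r0' x1 u) := fun x1 u => (rpl x1).map_neg u
  have rpm2 : ∀ x1 (c : K) u, A.r0' x1 (c • u) = c • A.r0' x1 u := fun x1 c u => (rpl x1).map_smul c u
  have rpz2 : ∀ x1, A.r0' x1 0 = 0 := fun x1  => (rpl x1).map_zero
  have r1a1 : ∀ x2 u v, A.r1 (u + v) x2 = A.r1 u x2 + A.r1 v x2 := fun x2 u v => (r1la x2).map_add u v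
  have r1s1 : ∀ x2 u v, A.r1 (u - v) x2 = A.r1 u x2 - A.r1 v x2 := fun x2 u v => (r1la x2).map_sub u v
  have r1n1 : ∀ x2 u, A.r1 (-u) x2 = -(A.r1 u x2) := fun x2 u => (r1la x2).map_neg u
  have r1m1 : ∀ x2 (c : K) u, A.r1 (c • u) x2 = c • A.r1 u x2 := fun x2 c u => (r1la x2).map_smul c u
  have r1z1 : ∀ x2, A.r1 0 x2 = 0 := fun x2  => (r1la x2).map_zero
  have r1a2 : ∀ x1 u v, A.r1 x1 (u + v) = A.r1 x1 u + A.r1 x1 v := fun x1 u v => (r1l x1).map_add u v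
  have r1s2 : ∀ x1 u v, A.r1 x1 (u - v) = A.r1 x1 u - A.r1 x1 v := fun x1 u v => (r1l x1).map_sub u v
  have r1n2 : ∀ x1 u, A.r1 x1 (-u) = -(A.r1 x1 u) := fun x1 u => (r1l x1).map_neg u
  have r1m2 : ∀ x1 (c : K) u, A.r1 x1 (c • u) = c • A.r1 x1 u := fun x1 c u => (r1l x1).map_smul c u
  have r1z2 : ∀ x1, A.r1 x1 0 = 0 := fun x1  => (r1l x1).map_zero
  have m3a1 : ∀ x2 x3 u v, M.l3 (u + v) x2 x3 = M.l3 u x2 x3 + M.l3 v x2 x3 := fun x2 x3 u v => (Ml3a x2 x3).map_add u v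
  have m3s1 : ∀ x2 x3 u v, M.l3 (u - v) x2 x3 = M.l3 u x2 x3 - M.l3 v x2 x3 := fun x2 x3 u v => (Ml3a x2 x3).map_sub u v
  have m3n1 : ∀ x2 x3 u, M.l3 (-u) x2 x3 = -(M.l3 u x2 x3) := fun x2 x3 u => (Ml3a x2 x3).map_neg u
  have m3m1 : ∀ x2 x3 (c : K) u, M.l3 (c • u) x2 x3 = c • M.l3 u x2 x3 := fun x2 x3 c u => (Ml3a x2 x3).map_smul c u
  have m3z1 : ∀ x2 x3, M.l3 0 x2 x3 = 0 := fun x2 x3  => (Ml3a x2 x3).map_zero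
  have m3a2 : ∀ x1 x3 u v, M.l3 x1 (u + v) x3 = M.l3 x1 u x3 + M.l3 x1 v x3 := fun x1 x3 u v => (Ml3b x1 x3).map_add u v
  have m3s2 : ∀ x1 x3 u v, M.l3 x1 (u - v) x3 = M.l3 x1 u x3 - M.l3 x1 v x3 := fun x1 x3 u v => (Ml3b x1 x3).map_sub u v
  have m3n2 : ∀ x1 x3 u, M.l3 x1 (-u) x3 = -(M.l3 x1 u x3) := fun x1 x3 u => (Ml3b x1 x3).map_neg u
  have m3m2 : ∀ x1 x3 (c : K) u, M.l3 x1 (c • u) x3 = c • M.l3 x1 u x3 := fun x1 x3 c u => (Ml3b x1 x3).map_smul c u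
  have m3z2 : ∀ x1 x3, M.l3 x1 0 x3 = 0 := fun x1 x3  => (Ml3b x1 x3).map_zero
  have m3a3 : ∀ x1 x2 u v, M.l3 x1 x2 (u + v) = M.l3 x1 x2 u + M.l3 x1 x2 v := fun x1 x2 u v => (Ml3c x1 x2).map_add u v
  have m3s3 : ∀ x1 x2 u v, M.l3 x1 x2 (u - v) = M.l3 x1 x2 u - M.l3 x1 x2 v := fun x1 x2 u v => (Ml3c x1 x2).map_sub u v
  have m3n3 : ∀ x1 x2 u, M.l3 x1 x2 (-u) = -(M.l3 x1 x2 u) := fun x1 x2 u => (Ml3c x1 x2).map_neg u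
  have m3m3 : ∀ x1 x2 (c : K) u, M.l3 x1 x2 (c • u) = c • M.l3 x1 x2 u := fun x1 x2 c u => (Ml3c x1 x2).map_smul c u
  have m3z3 : ∀ x1 x2, M.l3 x1 x2 0 = 0 := fun x1 x2  => (Ml3c x1 x2).map_zero
  have l3a1 : ∀ x2 x3 u v, L.l3 (u + v) x2 x3 = L.l3 u x2 x3 + L.l3 v x2 x3 := fun x2 x3 u v => (Ll3a x2 x3).map_add u v
  have l3s1 : ∀ x2 x3 u v, L.l3 (u - v) x2 x3 = L.l3 u x2 x3 - L.l3 v x2 x3 := fun x2 x3 u v => (Ll3a x2 x3).map_sub u v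
  have l3n1 : ∀ x2 x3 u, L.l3 (-u) x2 x3 = -(L.l3 u x2 x3) := fun x2 x3 u => (Ll3a x2 x3).map_neg u
  have l3m1 : ∀ x2 x3 (c : K) u, L.l3 (c • u) x2 x3 = c • L.l3 u x2 x3 := fun x2 x3 c u => (Ll3a x2 x3).map_smul c u
  have l3z1 : ∀ x2 x3, L.l3 0 x2 x3 = 0 := fun x2 x3  => (Ll3a x2 x3).map_zero
  have l3a2 : ∀ x1 x3 u v, L.l3 x1 (u + v) x3 = L.l3 x1 u x3 + L.l3 x1 v x3 := fun x1 x3 u v => (Ll3b x1 x3).map_add u v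
  have l3s2 : ∀ x1 x3 u v, L.l3 x1 (u - v) x3 = L.l3 x1 u x3 - L.l3 x1 v x3 := fun x1 x3 u v => (Ll3b x1 x3).map_sub u v
  have l3n2 : ∀ x1 x3 u, L.l3 x1 (-u) x3 = -(L.l3 x1 u x3) := fun x1 x3 u => (Ll3b x1 x3).map_neg u
  have l3m2 : ∀ x1 x3 (c : K) u, L.l3 x1 (c • u) x3 = c • L.l3 x1 u x3 := fun x1 x3 c u => (Ll3b x1 x3).map_smul c u
  have l3z2 : ∀ x1 x3, L.l3 x1 0 x3 = 0 := fun x1 x3  => (Ll3b x1 x3).map_zero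
  have l3a3 : ∀ x1 x2 u v, L.l3 x1 x2 (u + v) = L.l3 x1 x2 u + L.l3 x1 x2 v := fun x1 x2 u v => (Ll3c x1 x2).map_add u v
  have l3s3 : ∀ x1 x2 u v, L.l3 x1 x2 (u - v) = L.l3 x1 x2 u - L.l3 x1 x2 v := fun x1 x2 u v => (Ll3c x1 x2).map_sub u v
  have l3n3 : ∀ x1 x2 u, L.l3 x1 x2 (-u) = -(L.l3 x1 x2 u) := fun x1 x2 u => (Ll3c x1 x2).map_neg u
  have l3m3 : ∀ x1 x2 (c : K) u, L.l3 x1 x2 (c • u) = c • L.l3 x1 x2 u := fun x1 x2 c u => (Ll3c x1 x2).map_smul c u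
  have l3z3 : ∀ x1 x2, L.l3 x1 x2 0 = 0 := fun x1 x2  => (Ll3c x1 x2).map_zero
  have r2a1 : ∀ x2 x3 u v, A.r2 (u + v) x2 x3 = A.r2 u x2 x3 + A.r2 v x2 x3 := fun x2 x3 u v => (r2lx x2 x3).map_add u v
  have r2s1 : ∀ x2 x3 u v, A.r2 (u - v) x2 x3 = A.r2 u x2 x3 - A.r2 v x2 x3 := fun x2 x3 u v => (r2lx x2 x3).map_sub u v
  have r2n1 : ∀ x2 x3 u, A.r2 (-u) x2 x3 = -(A.r2 u x2 x3) := fun x2 x3 u => (r2lx x2 x3).map_neg u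
  have r2m1 : ∀ x2 x3 (c : K) u, A.r2 (c • u) x2 x3 = c • A.r2 u x2 x3 := fun x2 x3 c u => (r2lx x2 x3).map_smul c u
  have r2z1 : ∀ x2 x3, A.r2 0 x2 x3 = 0 := fun x2 x3  => (r2lx x2 x3).map_zero
  have r2a2 : ∀ x1 x3 u v, A.r2 x1 (u + v) x3 = A.r2 x1 u x3 + A.r2 x1 v x3 := fun x1 x3 u v => (r2ly x1 x3).map_add u v
  have r2s2 : ∀ x1 x3 u v, A.r2 x1 (u - v) x3 = A.r2 x1 u x3 - A.r2 x1 v x3 := fun x1 x3 u v => (r2ly x1 x3).map_sub u v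
  have r2n2 : ∀ x1 x3 u, A.r2 x1 (-u) x3 = -(A.r2 x1 u x3) := fun x1 x3 u => (r2ly x1 x3).map_neg u
  have r2m2 : ∀ x1 x3 (c : K) u, A.r2 x1 (c • u) x3 = c • A.r2 x1 u x3 := fun x1 x3 c u => (r2ly x1 x3).map_smul c u
  have r2z2 : ∀ x1 x3, A.r2 x1 0 x3 = 0 := fun x1 x3  => (r2ly x1 x3).map_zero
  have r2a3 : ∀ x1 x2 u v, A.r2 x1 x2 (u + v) = A.r2 x1 x2 u + A.r2 x1 x2 v := fun x1 x2 u v => (r2l x1 x2).map_add u v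
  have r2s3 : ∀ x1 x2 u v, A.r2 x1 x2 (u - v) = A.r2 x1 x2 u - A.r2 x1 x2 v := fun x1 x2 u v => (r2l x1 x2).map_sub u v
  have r2n3 : ∀ x1 x2 u, A.r2 x1 x2 (-u) = -(A.r2 x1 x2 u) := fun x1 x2 u => (r2l x1 x2).map_neg u
  have r2m3 : ∀ x1 x2 (c : K) u, A.r2 x1 x2 (c • u) = c • A.r2 x1 x2 u := fun x1 x2 c u => (r2l x1 x2).map_smul c u
  have r2z3 : ∀ x1 x2, A.r2 x1 x2 0 = 0 := fun x1 x2  => (r2l x1 x2).map_zero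
  have lpa1 : ∀ x2 x3 u v, lφ (u + v) x2 x3 = lφ u x2 x3 + lφ v x2 x3 := fun x2 x3 u v => (lplin1 x2 x3).map_add u v
  have lps1 : ∀ x2 x3 u v, lφ (u - v) x2 x3 = lφ u x2 x3 - lφ v x2 x3 := fun x2 x3 u v => (lplin1 x2 x3).map_sub u v
  have lpn1 : ∀ x2 x3 u, lφ (-u) x2 x3 = -(lφ u x2 x3) := fun x2 x3 u => (lplin1 x2 x3).map_neg u
  have lpm1 : ∀ x2 x3 (c : K) u, lφ (c • u) x2 x3 = c • lφ u x2 x3 := fun x2 x3 c u => (lplin1 x2 x3).map_smul c u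
  have lpz1 : ∀ x2 x3, lφ 0 x2 x3 = 0 := fun x2 x3  => (lplin1 x2 x3).map_zero
  have lpa2 : ∀ x1 x3 u v, lφ x1 (u + v) x3 = lφ x1 u x3 + lφ x1 v x3 := fun x1 x3 u v => (lplin2 x1 x3).map_add u v
  have lps2 : ∀ x1 x3 u v, lφ x1 (u - v) x3 = lφ x1 u x3 - lφ x1 v x3 := fun x1 x3 u v => (lplin2 x1 x3).map_sub u v
  have lpn2 : ∀ x1 x3 u, lφ x1 (-u) x3 = -(lφ x1 u x3) := fun x1 x3 u => (lplin2 x1 x3).map_neg u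
  have lpm2 : ∀ x1 x3 (c : K) u, lφ x1 (c • u) x3 = c • lφ x1 u x3 := fun x1 x3 c u => (lplin2 x1 x3).map_smul c u
  have lpz2 : ∀ x1 x3, lφ x1 0 x3 = 0 := fun x1 x3  => (lplin2 x1 x3).map_zero
  have lpa3 : ∀ x1 x2 u v, lφ x1 x2 (u + v) = lφ x1 x2 u + lφ x1 x2 v := fun x1 x2 u v => (lplin3 x1 x2).map_add u v
  have lps3 : ∀ x1 x2 u v, lφ x1 x2 (u - v) = lφ x1 x2 u - lφ x1 x2 v := fun x1 x2 u v => (lplin3 x1 x2).map_sub u v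
  have lpn3 : ∀ x1 x2 u, lφ x1 x2 (-u) = -(lφ x1 x2 u) := fun x1 x2 u => (lplin3 x1 x2).map_neg u
  have lpm3 : ∀ x1 x2 (c : K) u, lφ x1 x2 (c • u) = c • lφ x1 x2 u := fun x1 x2 c u => (lplin3 x1 x2).map_smul c u
  have lpz3 : ∀ x1 x2, lφ x1 x2 0 = 0 := fun x1 x2  => (lplin3 x1 x2).map_zero

  refine ⟨⟨?_, ?_, ?_, ?_, ?_, ?_, ?_, ?_, ?_, ?_, ?_, ?_, ?_, ?_, ?_, ?_⟩,
    ?_, ?_, ?_, ?_, ?_, ?_, ?_, ?_, ?_⟩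
  -- d is linear
  · exact ⟨fun u v => by
      simp only [crossedProduct, Prod.fst_add, Prod.snd_add, lda1, mda1, Prod.mk_add_mk],
      fun c u => by
      simp only [crossedProduct, Prod.smul_fst, Prod.smul_snd, ldm1, mdm1, Prod.smul_mk]⟩
  -- l2 linear in 2nd slot
  · intro p
    refine ⟨fun u v => ?_, fun c u => ?_⟩
    · simp only [crossedProduct, Prod.fst_add, Prod.snd_add, l2a2, m2a2, r0a2, r0a1,
        Prod.mk_add_mk, Prod.mk.injEq]
      exact ⟨trivial, by abel⟩
    · simp only [crossedProduct, Prod.smul_fst, Prod.smul_snd, l2m2, m2m2, r0m2, r0m1,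
        Prod.smul_mk, Prod.mk.injEq, smul_add, smul_sub]
  -- l2 linear in 1st slot
  · intro q
    refine ⟨fun u v => ?_, fun c u => ?_⟩
    · simp only [crossedProduct, Prod.fst_add, Prod.snd_add, l2a1, m2a1, r0a2, r0a1,
        Prod.mk_add_mk, Prod.mk.injEq]
      exact ⟨trivial, by abel⟩
    · simp only [crossedProduct, Prod.smul_fst, Prod.smul_snd, l2m1, m2m1, r0m2, r0m1,
        Prod.smul_mk, Prod.mk.injEq, smul_add, smul_sub]
  -- l2m linear in 2nd slot
  · intro p
    refine ⟨fun u v => ?_, fun c u => ?_⟩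
    · simp only [crossedProduct, Prod.fst_add, Prod.snd_add, lma2, mma2, rpa2, r1a1,
        Prod.mk_add_mk, Prod.mk.injEq]
      exact ⟨trivial, by abel⟩
    · simp only [crossedProduct, Prod.smul_fst, Prod.smul_snd, lmm2, mmm2, rpm2, r1m1,
        Prod.smul_mk, Prod.mk.injEq, smul_add, smul_sub]
  -- l2m linear in 1st slot
  · intro b
    refine ⟨fun u v => ?_, fun c u => ?_⟩
    · simp only [crossedProduct, Prod.fst_add, Prod.snd_add, lma1, mma1, rpa1, r1a2,
        Prod.mk_add_mk, Prod.mk.injEq]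
      exact ⟨trivial, by abel⟩
    · simp only [crossedProduct, Prod.smul_fst, Prod.smul_snd, lmm1, mmm1, rpm1, r1m2,
        Prod.smul_mk, Prod.mk.injEq, smul_add, smul_sub]
  -- l3 linear in 3rd slot
  · intro p q
    refine ⟨fun u v => ?_, fun c u => ?_⟩
    · simp only [crossedProduct, Prod.fst_add, Prod.snd_add, l3a3, m3a3, r2a3, r2a1, r2a2,
        lpa1, lpa2, lpa3, Prod.mk_add_mk, Prod.mk.injEq]
      exact ⟨trivial, by abel⟩
    · simp only [crossedProduct, Prod.smul_fst, Prod.smul_snd, l3m3, m3m3, r2m3, r2m1, r2m2,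
        lpm1, lpm2, lpm3, Prod.smul_mk, Prod.mk.injEq, smul_add, smul_sub]
  -- l3 linear in 2nd slot
  · intro p r
    refine ⟨fun u v => ?_, fun c u => ?_⟩
    · simp only [crossedProduct, Prod.fst_add, Prod.snd_add, l3a2, m3a2, r2a3, r2a1, r2a2,
        lpa1, lpa2, lpa3, Prod.mk_add_mk, Prod.mk.injEq]
      exact ⟨trivial, by abel⟩
    · simp only [crossedProduct, Prod.smul_fst, Prod.smul_snd, l3m2, m3m2, r2m3, r2m1, r2m2,
        lpm1, lpm2, lpm3, Prod.smul_mk, Prod.mk.injEq, smul_add, smul_sub]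
  -- l3 linear in 1st slot
  · intro q r
    refine ⟨fun u v => ?_, fun c u => ?_⟩
    · simp only [crossedProduct, Prod.fst_add, Prod.snd_add, l3a1, m3a1, r2a3, r2a1, r2a2,
        lpa1, lpa2, lpa3, Prod.mk_add_mk, Prod.mk.injEq]
      exact ⟨trivial, by abel⟩
    · simp only [crossedProduct, Prod.smul_fst, Prod.smul_snd, l3m1, m3m1, r2m3, r2m1, r2m2,
        lpm1, lpm2, lpm3, Prod.smul_mk, Prod.mk.injEq, smul_add, smul_sub]
  -- l2 skew
  · rintro ⟨x, α⟩ ⟨y, β⟩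
    simp only [crossedProduct, Prod.neg_mk, Prod.mk.injEq]
    exact ⟨Lsk2 x y, by linear_combination (norm := abel) Msk2 α β⟩
  -- l3 skew 12
  · rintro ⟨x, α⟩ ⟨y, β⟩ ⟨z, γ⟩
    simp only [crossedProduct, Prod.neg_mk, Prod.mk.injEq]
    refine ⟨Lsk3ab x y z, ?_⟩
    linear_combination (norm := abel) Msk3ab α β γ - r2sk x y γ - r2sk y z α - r2sk z x β
      + lpsk x β γ + lpsk y γ α + lpsk z α β
  -- l3 skew 23
  · rintro ⟨x, α⟩ ⟨y, β⟩ ⟨z, γ⟩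
    simp only [crossedProduct, Prod.neg_mk, Prod.mk.injEq]
    refine ⟨Lsk3bc x y z, ?_⟩
    linear_combination (norm := abel) Msk3bc α β γ - r2sk x y γ - r2sk y z α - r2sk z x β
      + lpsk x β γ + lpsk y γ α + lpsk z α β
  -- d ∘ l2m
  · rintro ⟨x, α⟩ ⟨a, ξ⟩
    simp only [crossedProduct, Prod.mk.injEq, mda1, mds1]
    exact ⟨Ldl2m x a, by linear_combination (norm := abel) Mdl2m α ξ + dr0p x ξ + r0d a α⟩
  -- l2m d skew
  · rintro ⟨a, ξ⟩ ⟨b, η⟩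
    simp only [crossedProduct, Prod.neg_mk, Prod.mk.injEq]
    exact ⟨Lsk2m a b, by
      linear_combination (norm := abel) Msk2m ξ η + rpd a η + rpd b ξ⟩
  -- d ∘ l3 (Jacobi up to homotopy, degree 0)
  · rintro ⟨x, α⟩ ⟨y, β⟩ ⟨z, γ⟩
    simp only [crossedProduct, Prod.mk_sub_mk, Prod.mk.injEq]
    refine ⟨Ljac x y z, ?_⟩
    simp only [mda1, mds1, mdn1, m2a1, m2s1, m2n1, m2a2, m2s2, m2n2,
      r0a1, r0s1, r0n1, r0a2, r0s2, r0n2]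
    have e1 : A.r0 (L.l2 z x) β = - A.r0 (L.l2 x z) β := by rw [Lsk2 z x, r0n1]
    have f1 : A.r0 y (M.l2 γ α) = - A.r0 y (M.l2 α γ) := by rw [Msk2 γ α, r0n2]
    linear_combination (norm := abel) Mjac α β γ + D2 x β γ + D2 y γ α + D2 z α β
      + jr0 x y γ + jr0 y z α + jr0 z x β + f1 - e1
      - Msk2 (A.r0 y γ) α - Msk2 γ (A.r0 y α) - Msk2 (A.r0 z α) β
  -- l3 on d (degree 1)
  · rintro ⟨x, α⟩ ⟨y, β⟩ ⟨a, ξ⟩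
    simp only [crossedProduct, Prod.mk_sub_mk, Prod.mk.injEq]
    refine ⟨Ljacm x y a, ?_⟩
    simp only [mma1, mms1, mmn1, mma2, mms2, mmn2, rpa2, rps2, rpn2, r1a2, r1s2, r1n2]
    linear_combination (norm := abel) Mjacm α β ξ + jrp x y ξ + jr1 y a α - jr1 x a β
      + D3 x β ξ - D3 y α ξ + lpd a α β
      + lpsk y (M.d ξ) α - r2sk (L.d a) x β
  -- the big quartic identity
  · rintro ⟨x, α⟩ ⟨y, β⟩ ⟨z, γ⟩ ⟨w, δ⟩
    simp only [crossedProduct, Prod.mk_sub_mk, Prod.mk_add_mk, Prod.mk.injEq]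
    refine ⟨Lbig x y z w, ?_⟩
    simp only [mma1, mms1, mmn1, mma2, mms2, mmn2, rpa2, rps2, rpn2,
      m3a1, m3s1, m3n1, m3a2, m3s2, m3n2, m3a3, m3s3, m3n3,
      r2a3, r2s3, r2n3, lpa2, lps2, lpn2, lpa3, lps3, lpn3]
    have hf1 : M.l2m α (A.r2 w y γ) = -(M.l2m α (A.r2 y w γ)) := by simp only [r2sk w y, mmn2, neg_neg]
    have hf2 : M.l2m α (lφ z δ β) = -(M.l2m α (lφ z β δ)) := by simp only [lpsk z δ β, mmn2, neg_neg]
    have hf3 : A.r0' x (A.r2 w y γ) = -(A.r0' x (A.r2 y w γ)) := by simp only [r2sk w y, rpn2, neg_neg]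
    have hf4 : A.r0' x (lφ z δ β) = -(A.r0' x (lφ z β δ)) := by simp only [lpsk z δ β, rpn2, neg_neg]
    have hf5 : M.l2m β (A.r2 w x γ) = -(M.l2m β (A.r2 x w γ)) := by simp only [r2sk w x, mmn2, neg_neg]
    have hf6 : A.r0' y (lφ z δ α) = -(A.r0' y (lφ z α δ)) := by simp only [lpsk z δ α, rpn2, neg_neg]
    have hf7 : M.l2m γ (A.r2 w x β) = -(M.l2m γ (A.r2 x w β)) := by simp only [r2sk w x, mmn2, neg_neg]
    have hf8 : A.r0' z (lφ y δ α) = -(A.r0' z (lφ y α δ)) := by simp only [lpsk y δ α, rpn2, neg_neg]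
    have hf9 : M.l2m δ (A.r2 z x β) = -(M.l2m δ (A.r2 x z β)) := by simp only [r2sk z x, mmn2, neg_neg]
    have hf10 : M.l2m δ (lφ y γ α) = -(M.l2m δ (lφ y α γ)) := by simp only [lpsk y γ α, mmn2, neg_neg]
    have hf11 : A.r0' w (A.r2 z x β) = -(A.r0' w (A.r2 x z β)) := by simp only [r2sk z x, rpn2, neg_neg]
    have hf12 : A.r0' w (lφ y γ α) = -(A.r0' w (lφ y α γ)) := by simp only [lpsk y γ α, rpn2, neg_neg]
    have hf13 : lφ x γ (M.l2 δ β) = -(lφ x γ (M.l2 β δ)) := by simp only [Msk2 δ β, lpn3, neg_neg]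
    have hf14 : M.l2m γ (lφ x δ β) = -(M.l2m γ (lφ x β δ)) := by simp only [lpsk x δ β, mmn2, neg_neg]
    have hf15 : M.l3 β (A.r0 x γ) δ = -(M.l3 β δ (A.r0 x γ)) := by simp only [Msk3bc β (A.r0 x γ) δ, neg_neg]
    have hf16 : lφ z β (M.l2 δ α) = -(lφ z β (M.l2 α δ)) := by simp only [Msk2 δ α, lpn3, neg_neg]
    have hf17 : M.l3 α (A.r0 z β) δ = -(M.l3 α δ (A.r0 z β)) := by simp only [Msk3bc α (A.r0 z β) δ, neg_neg]
    have hf18 : A.r2 (L.l2 y z) w α = -(A.r2 w (L.l2 y z) α) := by simp only [r2sk (L.l2 y z) w, neg_neg]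
    have hf19 : A.r2 (L.l2 z w) y α = -(A.r2 y (L.l2 z w) α) := by simp only [r2sk (L.l2 z w) y, neg_neg]
    have hf20 : A.r2 (L.l2 w y) z α = (A.r2 z (L.l2 y w) α) := by simp only [Lsk2 w y, r2n1, r2sk (L.l2 y w) z, neg_neg]
    have hf21 : A.r2 w x (A.r0 z β) = -(A.r2 x w (A.r0 z β)) := by simp only [r2sk w x, neg_neg]
    have hf22 : A.r2 (L.l2 x y) w γ = -(A.r2 w (L.l2 x y) γ) := by simp only [r2sk (L.l2 x y) w, neg_neg]
    have hf23 : A.r2 (L.l2 w x) y γ = (A.r2 y (L.l2 x w) γ) := by simp only [Lsk2 w x, r2n1, r2sk (L.l2 x w) y, neg_neg]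
    have hf24 : A.r0' y (A.r2 z x δ) = -(A.r0' y (A.r2 x z δ)) := by simp only [r2sk z x, rpn2, neg_neg]
    have hf25 : A.r2 z x (A.r0 y δ) = -(A.r2 x z (A.r0 y δ)) := by simp only [r2sk z x, neg_neg]
    have hf26 : lφ y (A.r0 x γ) δ = -(lφ y δ (A.r0 x γ)) := by simp only [lpsk y (A.r0 x γ) δ, neg_neg]
    have hf27 : lφ x (A.r0 y γ) δ = -(lφ x δ (A.r0 y γ)) := by simp only [lpsk x (A.r0 y γ) δ, neg_neg]
    have hf28 : lφ x (A.r0 w β) γ = -(lφ x γ (A.r0 w β)) := by simp only [lpsk x (A.r0 w β) γ, neg_neg]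
    have hf29 : lφ z (A.r0 y α) δ = -(lφ z δ (A.r0 y α)) := by simp only [lpsk z (A.r0 y α) δ, neg_neg]
    have hf30 : lφ y (A.r0 z α) δ = -(lφ y δ (A.r0 z α)) := by simp only [lpsk y (A.r0 z α) δ, neg_neg]
    have hf31 : lφ w (M.l2 α β) γ = -(lφ w γ (M.l2 α β)) := by simp only [lpsk w (M.l2 α β) γ, neg_neg]
    have hf32 : M.l3 (A.r0 x γ) β δ = (M.l3 β δ (A.r0 x γ)) := by simp only [Msk3ab (A.r0 x γ) β δ, Msk3bc β (A.r0 x γ) δ, neg_neg]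
    have hf33 : A.r2 (L.l2 x z) y δ = -(A.r2 y (L.l2 x z) δ) := by simp only [r2sk (L.l2 x z) y, neg_neg]
    have hf34 : lφ w (M.l2 α γ) β = -(lφ w β (M.l2 α γ)) := by simp only [lpsk w (M.l2 α γ) β, neg_neg]
    have hf35 : lφ w (A.r0 x γ) β = -(lφ w β (A.r0 x γ)) := by simp only [lpsk w (A.r0 x γ) β, neg_neg]
    have hf36 : M.l3 (A.r0 x δ) β γ = (M.l3 β γ (A.r0 x δ)) := by simp only [Msk3ab (A.r0 x δ) β γ, Msk3bc β (A.r0 x δ) γ, neg_neg]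
    have hf37 : A.r2 (L.l2 x w) y γ = -(A.r2 y (L.l2 x w) γ) := by simp only [r2sk (L.l2 x w) y, neg_neg]
    have hf38 : lφ z (M.l2 α δ) β = -(lφ z β (M.l2 α δ)) := by simp only [lpsk z (M.l2 α δ) β, neg_neg]
    have hf39 : lφ z (A.r0 x δ) β = -(lφ z β (A.r0 x δ)) := by simp only [lpsk z (A.r0 x δ) β, neg_neg]
    have hf40 : M.l3 (A.r0 y γ) α δ = (M.l3 α δ (A.r0 y γ)) := by simp only [Msk3ab (A.r0 y γ) α δ, Msk3bc α (A.r0 y γ) δ, neg_neg]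
    have hf41 : M.l3 (A.r0 z β) α δ = (M.l3 α δ (A.r0 z β)) := by simp only [Msk3ab (A.r0 z β) α δ, Msk3bc α (A.r0 z β) δ, neg_neg]
    have hf42 : lφ w (M.l2 β γ) α = -(lφ w α (M.l2 β γ)) := by simp only [lpsk w (M.l2 β γ) α, neg_neg]
    have hf43 : lφ w (A.r0 y γ) α = -(lφ w α (A.r0 y γ)) := by simp only [lpsk w (A.r0 y γ) α, neg_neg]
    have hf44 : lφ w (A.r0 z β) α = -(lφ w α (A.r0 z β)) := by simp only [lpsk w (A.r0 z β) α, neg_neg]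
    have hf45 : M.l3 (A.r0 y δ) α γ = (M.l3 α γ (A.r0 y δ)) := by simp only [Msk3ab (A.r0 y δ) α γ, Msk3bc α (A.r0 y δ) γ, neg_neg]
    have hf46 : M.l3 (A.r0 w β) α γ = (M.l3 α γ (A.r0 w β)) := by simp only [Msk3ab (A.r0 w β) α γ, Msk3bc α (A.r0 w β) γ, neg_neg]
    have hf47 : lφ z (M.l2 β δ) α = -(lφ z α (M.l2 β δ)) := by simp only [lpsk z (M.l2 β δ) α, neg_neg]
    have hf48 : lφ z (A.r0 y δ) α = -(lφ z α (A.r0 y δ)) := by simp only [lpsk z (A.r0 y δ) α, neg_neg]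
    have hf49 : lφ z (A.r0 w β) α = -(lφ z α (A.r0 w β)) := by simp only [lpsk z (A.r0 w β) α, neg_neg]
    have hf50 : M.l3 (A.r0 z δ) α β = (M.l3 α β (A.r0 z δ)) := by simp only [Msk3ab (A.r0 z δ) α β, Msk3bc α (A.r0 z δ) β, neg_neg]
    have hf51 : M.l3 (A.r0 w γ) α β = (M.l3 α β (A.r0 w γ)) := by simp only [Msk3ab (A.r0 w γ) α β, Msk3bc α (A.r0 w γ) β, neg_neg]
    have hf52 : lφ y (M.l2 γ δ) α = -(lφ y α (M.l2 γ δ)) := by simp only [lpsk y (M.l2 γ δ) α, neg_neg]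
    have hf53 : lφ y (A.r0 z δ) α = -(lφ y α (A.r0 z δ)) := by simp only [lpsk y (A.r0 z δ) α, neg_neg]
    have hf54 : lφ y (A.r0 w γ) α = -(lφ y α (A.r0 w γ)) := by simp only [lpsk y (A.r0 w γ) α, neg_neg]
    have hf55 : lφ y γ (M.l2 δ α) = -(lφ y γ (M.l2 α δ)) := by simp only [Msk2 δ α, lpn3, neg_neg]
    have hf56 : M.l3 α (A.r0 y γ) δ = -(M.l3 α δ (A.r0 y γ)) := by simp only [Msk3bc α (A.r0 y γ) δ, neg_neg]
    have hf57 : lφ w β (M.l2 γ α) = -(lφ w β (M.l2 α γ)) := by simp only [Msk2 γ α, lpn3, neg_neg]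
    have hf58 : M.l2m β (lφ w γ α) = -(M.l2m β (lφ w α γ)) := by simp only [lpsk w γ α, mmn2, neg_neg]
    have hf59 : M.l3 α (A.r0 w β) γ = -(M.l3 α γ (A.r0 w β)) := by simp only [Msk3bc α (A.r0 w β) γ, neg_neg]
    have hf60 : A.r0' z (A.r2 w y α) = -(A.r0' z (A.r2 y w α)) := by simp only [r2sk w y, rpn2, neg_neg]
    have hf61 : A.r2 w y (A.r0 z α) = -(A.r2 y w (A.r0 z α)) := by simp only [r2sk w y, neg_neg]
    have hf62 : A.r2 (L.l2 x z) w β = -(A.r2 w (L.l2 x z) β) := by simp only [r2sk (L.l2 x z) w, neg_neg]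
    have hf63 : A.r2 (L.l2 w x) z β = (A.r2 z (L.l2 x w) β) := by simp only [Lsk2 w x, r2n1, r2sk (L.l2 x w) z, neg_neg]
    have hf64 : A.r2 w x (A.r0 y γ) = -(A.r2 x w (A.r0 y γ)) := by simp only [r2sk w x, neg_neg]
    have hf65 : A.r2 (L.l2 z x) y δ = (A.r2 y (L.l2 x z) δ) := by simp only [Lsk2 z x, r2n1, r2sk (L.l2 x z) y, neg_neg]
    have hf66 : lφ z (A.r0 x β) δ = -(lφ z δ (A.r0 x β)) := by simp only [lpsk z (A.r0 x β) δ, neg_neg]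
    have hf67 : lφ x (A.r0 z β) δ = -(lφ x δ (A.r0 z β)) := by simp only [lpsk x (A.r0 z β) δ, neg_neg]
    have hf68 : lφ y (A.r0 w α) γ = -(lφ y γ (A.r0 w α)) := by simp only [lpsk y (A.r0 w α) γ, neg_neg]
    linear_combination (norm := abel) Mbig α β γ δ
      + D4 x β γ δ - D4 y α γ δ + D4 z α β δ - D4 w α β γ
      + jr2 y z w α - jr2 x z w β + jr2 x y w γ - jr2 x y z δ
      - lpl2 x y γ δ + lpl2 x z β δ - lpl2 x w β γ - lpl2 y z α δ + lpl2 y w α γ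
      - lpl2 z w α β
      - hf1 + hf2 - hf3 + hf4 + hf5 - hf6 - hf7 + hf8 + hf9 - hf10 + hf11 - hf12 + hf13 + hf14 + hf15 + hf16 + hf17 + hf18 + hf19 + hf20 - hf21 + hf22 + hf23 + hf24 - hf25 + hf26 - hf27 - hf28 + hf29 - hf30 - hf31 + hf32 - hf33 + hf34 + hf35 - hf36 + hf37 - hf38 - hf39 - hf40 + hf41 - hf42 - hf43 + hf44 + hf45 - hf46 + hf47 + hf48 - hf49 - hf50 + hf51 - hf52 - hf53 + hf54 - hf55 - hf56 - hf57 - hf58 - hf59 - hf60 + hf61 - hf62 - hf63 + hf64 - hf65 - hf66 + hf67 + hf68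
  -- g is a subalgebra
  · intro x y
    simp only [crossedProduct, m2z1, r0z2, add_zero, sub_zero, zero_add, zero_sub, neg_zero]
  · intro x a
    simp only [crossedProduct, mmz1, rpz2, r1z2, add_zero, sub_zero, zero_add, zero_sub,
      neg_zero]
  · intro a
    simp only [crossedProduct, mdz1]
  · intro x y z
    simp only [crossedProduct, m3z1, r2z3, lpz2, lpz3, add_zero, sub_zero, zero_add,
      zero_sub, neg_zero, neg_neg]
  -- m is an ideal
  · intro ξ
    simp only [crossedProduct, ldz1]
  · intro α q
    simp only [crossedProduct, l2z1]
  · intro α b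
    simp only [crossedProduct, lmz1]
  · intro p ξ
    simp only [crossedProduct, lmz2]
  · intro α q r
    simp only [crossedProduct, l3z1]
end
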